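/- arXiv:1608.06113 — 8 statements merged into one kernel-verified Lean document; each statement's English description precedes it below -/
import Mathlib

section
/- Let m, n be positive integers, let μ_m ⊂ ℂ be the group of m-th roots of unity, and let f : μ_m^n → ℂ be a nonzero function that is the restriction of a polynomial in ℂ[x₁,…,x_n] of total degree at most d. Then the number of points z ∈ μ_m^n with f(z) ≠ 0 is at least m^n / m^{d/(m−1)}. -/
open MvPolynomial Finset

-- pow reduction mod m on roots of unity
lemma dlsz_pow_mod {z : ℂ} {m : ℕ} (h : z ^ m = 1) (b : ℕ) : z ^ b = z ^ (b % m) := by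
  conv_lhs => rw [← Nat.mod_add_div b m, pow_add, pow_mul, h, one_pow, mul_one]

/-- Reduce exponents mod m. -/
lemma dlsz_reduce (m : ℕ) (hm : 0 < m) {n : ℕ} (p : MvPolynomial (Fin n) ℂ) :
    ∃ q : MvPolynomial (Fin n) ℂ, q.totalDegree ≤ p.totalDegree ∧
      (∀ i, q.degreeOf i ≤ m - 1) ∧
      ∀ z : Fin n → ℂ, (∀ i, z i ^ m = 1) → eval z q = eval z p := by
  classical
  set red : (Fin n →₀ ℕ) → (Fin n →₀ ℕ) :=
    fun s => s.mapRange (· % m) (Nat.zero_mod m) with hred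
  refine ⟨∑ s ∈ p.support, monomial (red s) (p.coeff s), ?_, ?_, ?_⟩
  · refine (totalDegree_finset_sum _ _).trans (Finset.sup_le fun s hs => ?_)
    refine (totalDegree_monomial_le _ _).trans ?_
    simp only [Function.id_def]
    have h1 : (red s).sum (fun _ e => e) = s.sum fun _ e => e % m := by
      rw [hred]; exact Finsupp.sum_mapRange_index (fun _ => rfl)
    rw [h1]
    refine le_trans ?_ (MvPolynomial.le_totalDegree hs)
    rw [Finsupp.sum, Finsupp.sum]
    exact Finset.sum_le_sum fun i _ => Nat.mod_le _ _
  · intro i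
    rw [MvPolynomial.degreeOf_le_iff]
    intro t ht
    have := MvPolynomial.support_sum ht
    simp only [Finset.mem_biUnion] at this
    obtain ⟨s, _, hts⟩ := this
    have := MvPolynomial.support_monomial_subset hts
    simp only [Finset.mem_singleton] at this
    subst this
    have : s i % m < m := Nat.mod_lt _ hm
    simpa [hred, Finsupp.mapRange_apply] using Nat.le_sub_one_of_lt this
  · intro z hz
    conv_rhs => rw [← MvPolynomial.support_sum_monomial_coeff p]
    rw [map_sum, map_sum]
    refine Finset.sum_congr rfl fun s _ => ?_
    rw [eval_monomial, eval_monomial]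
    congr 1
    rw [hred]
    rw [Finsupp.prod_mapRange_index (fun _ => pow_zero _)]
    exact Finsupp.prod_congr fun i _ => (dlsz_pow_mod (hz i) (s i)).symm


/-- `m * m^(-e/(m-1)) ≤ m - e` for `e ≤ m-1`, `m ≥ 2`. -/
lemma dlsz_key_real (m : ℕ) (hm : 2 ≤ m) (e : ℕ) (he : e ≤ m - 1) :
    (m : ℝ) * (m : ℝ) ^ (-(e : ℝ) / ((m : ℝ) - 1)) ≤ (m : ℝ) - e := by
  have hM : (2 : ℝ) ≤ (m : ℝ) := by exact_mod_cast hm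
  have hM1 : (0 : ℝ) < (m : ℝ) - 1 := by linarith
  have hMpos : (0 : ℝ) < m := by linarith
  have heR : (e : ℝ) ≤ (m : ℝ) - 1 := by
    have : (e : ℝ) ≤ ((m - 1 : ℕ) : ℝ) := by exact_mod_cast he
    rwa [Nat.cast_sub (by omega), Nat.cast_one] at this
  set s : ℝ := ((m : ℝ) - 1 - e) / ((m : ℝ) - 1) with hs
  have hs0 : 0 ≤ s := div_nonneg (by linarith) hM1.le
  have hs1 : s ≤ 1 := by
    rw [hs, div_le_one hM1]; linarith
  have key : (m : ℝ) ^ s * (1 : ℝ) ^ (1 - s) ≤ s * m + (1 - s) * 1 :=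
    Real.geom_mean_le_arith_mean2_weighted hs0 (by linarith) hMpos.le zero_le_one
      (by ring)
  rw [Real.one_rpow, mul_one] at key
  have harith : s * m + (1 - s) * 1 = (m : ℝ) - e := by
    rw [hs]; field_simp; ring
  have hexp : (m : ℝ) * (m : ℝ) ^ (-(e : ℝ) / ((m : ℝ) - 1)) = (m : ℝ) ^ s := by
    rw [hs]
    rw [show ((m : ℝ) - 1 - e) / ((m : ℝ) - 1) = 1 + (-(e : ℝ) / ((m : ℝ) - 1)) by
      field_simp; ring]
    rw [Real.rpow_add hMpos, Real.rpow_one]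
  rw [hexp]
  calc (m : ℝ) ^ s ≤ s * m + (1 - s) * 1 := key
    _ = (m : ℝ) - e := harith



lemma dlsz_count (m : ℕ) (hm : 2 ≤ m) :
    ∀ (n : ℕ) (q : MvPolynomial (Fin n) ℂ), q ≠ 0 → (∀ i, q.degreeOf i ≤ m - 1) →
      (m : ℝ) ^ n * (m : ℝ) ^ (-(q.totalDegree : ℝ) / ((m : ℝ) - 1)) ≤
        ((Fintype.piFinset fun _ : Fin n => Polynomial.nthRootsFinset m (1 : ℂ)).filter
          (fun z => MvPolynomial.eval z q ≠ 0)).card := by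
  classical
  intro n
  induction n with
  | zero =>
    intro q hq _
    obtain ⟨c, rfl⟩ := MvPolynomial.C_surjective (Fin 0) q
    have hc : c ≠ 0 := fun h => hq (by rw [h, map_zero])
    have h1 : (Fintype.piFinset fun _ : Fin 0 => Polynomial.nthRootsFinset m (1 : ℂ)).filter
        (fun z => MvPolynomial.eval z (C c) ≠ 0) =
        Fintype.piFinset fun _ : Fin 0 => Polynomial.nthRootsFinset m (1 : ℂ) := by
      apply Finset.filter_true_of_mem
      intro z _
      simpa using hc
    rw [h1]
    simp [MvPolynomial.totalDegree_C]
  | succ n ih =>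
    intro q hq hdeg
    have hm0 : 0 < m := by omega
    set μ : Finset ℂ := Polynomial.nthRootsFinset m (1 : ℂ) with hμdef
    have hμcard : μ.card = m := (Complex.isPrimitiveRoot_exp m (by omega)).card_nthRootsFinset
    set P : Polynomial (MvPolynomial (Fin n) ℂ) := finSuccEquiv ℂ n q with hP
    have hPne : P ≠ 0 := by
      rw [hP]
      exact fun h => hq ((map_eq_zero_iff _ (AlgEquiv.injective _)).mp h)
    set e : ℕ := P.natDegree with he
    have hee : e ≤ m - 1 := by
      rw [he, hP, natDegree_finSuccEquiv]; exact hdeg 0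
    have heltm : e < m := by omega
    set lc : MvPolynomial (Fin n) ℂ := P.leadingCoeff with hlc
    have hlcne : lc ≠ 0 := Polynomial.leadingCoeff_ne_zero.mpr hPne
    have hlcdeg : ∀ i, lc.degreeOf i ≤ m - 1 := fun i =>
      le_trans (degreeOf_coeff_finSuccEquiv q i e) (hdeg i.succ)
    have hDe : lc.totalDegree + e ≤ q.totalDegree :=
      totalDegree_coeff_finSuccEquiv_add_le q e hlcne
    have heD : e ≤ q.totalDegree := le_trans (Nat.le_add_left _ _) hDe
    set S : Finset (Fin n → ℂ) :=
      (Fintype.piFinset fun _ : Fin n => μ).filter (fun s => eval s lc ≠ 0) with hS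
    set B : Finset (Fin (n + 1) → ℂ) :=
      (Fintype.piFinset fun _ : Fin (n + 1) => μ).filter
        (fun z => MvPolynomial.eval z q ≠ 0) with hB
    set T : (Fin n → ℂ) → Finset ℂ :=
      fun s => μ.filter (fun a => MvPolynomial.eval (Fin.cons a s) q ≠ 0) with hT
    -- each good s contributes ≥ m - e points
    have hTcard : ∀ s ∈ S, m - e ≤ (T s).card := by
      intro s hs
      rw [hS, Finset.mem_filter] at hs
      set u : Polynomial ℂ := P.map (eval s) with hu
      have hules : u.natDegree ≤ e := Polynomial.natDegree_map_le
      have huc : u.coeff e = eval s lc := by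
        rw [hu, Polynomial.coeff_map, hlc, Polynomial.leadingCoeff]
      have hune : u ≠ 0 := fun h => hs.2 (by rw [← huc, h, Polynomial.coeff_zero])
      have hevz : ∀ a : ℂ, MvPolynomial.eval (Fin.cons a s) q =
          Polynomial.eval a u := by
        intro a
        rw [hu, hP]
        exact eval_eq_eval_mv_eval' s a q
      have hzero : (μ.filter (fun a => ¬ MvPolynomial.eval (Fin.cons a s) q ≠ 0)).card ≤ e := by
        refine le_trans (Polynomial.card_le_degree_of_subset_roots (p := u) ?_) hules
        intro a ha
        rw [Finset.mem_val, Finset.mem_filter] at ha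
        rw [Polynomial.mem_roots hune]
        have := ha.2
        rw [hevz a] at this
        simpa [Polynomial.IsRoot] using not_not.mp this
      have hsplit : (μ.filter (fun a => MvPolynomial.eval (Fin.cons a s) q ≠ 0)).card
          + (μ.filter (fun a => ¬ MvPolynomial.eval (Fin.cons a s) q ≠ 0)).card = m := by
        rw [← hμcard]
        exact Finset.card_filter_add_card_filter_not _
      show m - e ≤ (μ.filter (fun a => MvPolynomial.eval (Fin.cons a s) q ≠ 0)).card
      omega
    set img : (Fin n → ℂ) → Finset (Fin (n + 1) → ℂ) :=
      fun s => (T s).image (fun a => Fin.cons a s) with himg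
    -- disjoint union bound
    have hsum : (m - e) * S.card ≤ B.card := by
      have hsub : S.biUnion img ⊆ B := by
        intro z hz
        rw [Finset.mem_biUnion] at hz
        obtain ⟨s, hsS, hz⟩ := hz
        rw [himg, Finset.mem_image] at hz
        obtain ⟨a, haT, rfl⟩ := hz
        rw [hT, Finset.mem_filter] at haT
        rw [hS, Finset.mem_filter] at hsS
        rw [hB, Finset.mem_filter]
        constructor
        · rw [Fintype.mem_piFinset]
          intro i
          refine Fin.cases ?_ ?_ i
          · simpa using haT.1
          · intro j
            simpa using (Fintype.mem_piFinset.mp hsS.1) j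
        · exact haT.2
      have hdisj : (S : Set (Fin n → ℂ)).PairwiseDisjoint
          img := by
        intro s₁ _ s₂ _ hne
        refine Finset.disjoint_left.mpr ?_
        intro z hz1 hz2
        rw [himg, Finset.mem_image] at hz1 hz2
        obtain ⟨a₁, _, rfl⟩ := hz1
        obtain ⟨a₂, _, h⟩ := hz2
        apply hne
        have := congrArg Fin.tail h
        simpa [Fin.tail_cons] using this.symm
      calc (m - e) * S.card = ∑ _s ∈ S, (m - e) := by
            rw [Finset.sum_const, smul_eq_mul, mul_comm]
        _ ≤ ∑ s ∈ S, (img s).card := by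
            refine Finset.sum_le_sum fun s hs => ?_
            rw [himg]
            rw [Finset.card_image_of_injective _ (fun a₁ a₂ h => by
              simpa using congrFun h 0)]
            exact hTcard s hs
        _ = (S.biUnion img).card :=
            (Finset.card_biUnion (fun s₁ h₁ s₂ h₂ hne => hdisj h₁ h₂ hne)).symm
        _ ≤ B.card := Finset.card_le_card hsub
    -- induction hypothesis
    have hih := ih lc hlcne hlcdeg
    -- real arithmetic
    have hM : (2 : ℝ) ≤ (m : ℝ) := by exact_mod_cast hm
    have hM1 : (0 : ℝ) < (m : ℝ) - 1 := by linarith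
    have hMpos : (0 : ℝ) < (m : ℝ) := by linarith
    have hMgt1 : (1 : ℝ) < (m : ℝ) := by linarith
    set D : ℕ := q.totalDegree with hD
    have hkey := dlsz_key_real m hm e hee
    have hmono : (m : ℝ) ^ (-(lc.totalDegree : ℝ) / ((m : ℝ) - 1)) ≥
        (m : ℝ) ^ (-((D : ℝ) - e) / ((m : ℝ) - 1)) := by
      apply Real.rpow_le_rpow_left_iff hMgt1 |>.mpr
      have : (lc.totalDegree : ℝ) ≤ (D : ℝ) - e := by
        have := hDe
        have h2 : (lc.totalDegree : ℝ) + e ≤ (D : ℝ) := by exact_mod_cast this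
        linarith
      exact (div_le_div_iff_of_pos_right hM1).mpr (by linarith)
    have hih' : (m : ℝ) ^ n * (m : ℝ) ^ (-((D : ℝ) - e) / ((m : ℝ) - 1)) ≤ S.card := by
      refine le_trans ?_ hih
      have hpn : (0 : ℝ) ≤ (m : ℝ) ^ n := by positivity
      exact mul_le_mul_of_nonneg_left hmono hpn
    have hBm : ((m : ℝ) - e) * S.card ≤ B.card := by
      have h1 : (((m - e) * S.card : ℕ) : ℝ) ≤ (B.card : ℝ) := by exact_mod_cast hsum
      have h2 : (((m - e) * S.card : ℕ) : ℝ) = ((m : ℝ) - e) * S.card := by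
        rw [Nat.cast_mul, Nat.cast_sub heltm.le]
      linarith
    calc (m : ℝ) ^ (n + 1) * (m : ℝ) ^ (-(D : ℝ) / ((m : ℝ) - 1))
        = ((m : ℝ) * (m : ℝ) ^ (-(e : ℝ) / ((m : ℝ) - 1))) *
          ((m : ℝ) ^ n * (m : ℝ) ^ (-((D : ℝ) - e) / ((m : ℝ) - 1))) := by
          rw [show (-(D : ℝ)) / ((m : ℝ) - 1) =
              (-(e : ℝ)) / ((m : ℝ) - 1) + (-((D : ℝ) - e)) / ((m : ℝ) - 1) by ring,
            Real.rpow_add hMpos]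
          ring
      _ ≤ ((m : ℝ) - e) * S.card := by
          refine mul_le_mul hkey hih' (by positivity) ?_
          have : (e : ℝ) ≤ (m : ℝ) - 1 := by
            have : (e : ℝ) < (m : ℝ) := by exact_mod_cast heltm
            have hje : ((e : ℕ) : ℝ) + 1 ≤ (m : ℝ) := by exact_mod_cast heltm
            linarith
          linarith
      _ ≤ (B.card : ℝ) := hBm



/-- DeMillo–Lipton–Schwartz–Zippel over roots of unity: a nonzero function on
`μ_m^n` interpolated by a polynomial of total degree at most `d` is nonzero on
at least `m^n / m^{d/(m-1)}` points. -/
theorem stmt_4 (m n d : ℕ) (hm : 0 < m) (hn : 0 < n)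
    (f : (Fin n → ℂ) → ℂ) (p : MvPolynomial (Fin n) ℂ)
    (hdeg : p.totalDegree ≤ d)
    (hinterp : ∀ z : Fin n → ℂ, (∀ i, z i ^ m = 1) → MvPolynomial.eval z p = f z)
    (hnonzero : ∃ z : Fin n → ℂ, (∀ i, z i ^ m = 1) ∧ f z ≠ 0) :
    (m : ℝ) ^ n / (m : ℝ) ^ ((d : ℝ) / ((m : ℝ) - 1)) ≤
      ({z : Fin n → ℂ | (∀ i, z i ^ m = 1) ∧ f z ≠ 0}.ncard : ℝ) := by
  classical
  obtain ⟨z₀, hz₀, hfz₀⟩ := hnonzero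
  rcases Nat.lt_or_ge m 2 with h1 | h2
  · -- m = 1
    have hm1 : m = 1 := by omega
    subst hm1
    have hset : {z : Fin n → ℂ | (∀ i, z i ^ 1 = 1) ∧ f z ≠ 0} =
        {fun _ => (1 : ℂ)} := by
      ext z
      simp only [Set.mem_setOf_eq, Set.mem_singleton_iff, pow_one]
      constructor
      · rintro ⟨h, _⟩
        funext i; exact h i
      · rintro rfl
        refine ⟨fun i => rfl, ?_⟩
        have hz : z₀ = fun _ => (1 : ℂ) := funext fun i => by
          simpa using hz₀ i
        rw [← hz]; exact hfz₀
    rw [hset, Set.ncard_singleton]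
    norm_num
  · -- m ≥ 2
    obtain ⟨q, hqd, hqdeg, hqeval⟩ := dlsz_reduce m hm p
    have hq0 : q ≠ 0 := by
      intro h
      apply hfz₀
      rw [← hinterp z₀ hz₀, ← hqeval z₀ hz₀, h, map_zero]
    set F : Finset (Fin n → ℂ) :=
      (Fintype.piFinset fun _ : Fin n => Polynomial.nthRootsFinset m (1 : ℂ)).filter
        (fun z => MvPolynomial.eval z q ≠ 0) with hF
    have hcount := dlsz_count m h2 n q hq0 hqdeg
    have hpow : ∀ z : Fin n → ℂ, (∀ i, z i ∈ Polynomial.nthRootsFinset m (1 : ℂ)) ↔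
        (∀ i, z i ^ m = 1) := by
      intro z
      constructor <;> intro h i
      · exact (Polynomial.mem_nthRootsFinset hm 1).mp (h i)
      · exact (Polynomial.mem_nthRootsFinset hm 1).mpr (h i)
    have hsetF : {z : Fin n → ℂ | (∀ i, z i ^ m = 1) ∧ f z ≠ 0} = ↑F := by
      ext z
      simp only [Set.mem_setOf_eq, hF, Finset.coe_filter, Fintype.mem_piFinset]
      constructor
      · rintro ⟨h, hfz⟩
        refine ⟨(hpow z).mpr h, ?_⟩
        rw [hqeval z h, hinterp z h]; exact hfz
      · rintro ⟨h, hqz⟩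
        have h' := (hpow z).mp h
        refine ⟨h', ?_⟩
        rw [← hinterp z h', ← hqeval z h']; exact hqz
    rw [hsetF, Set.ncard_coe_finset]
    have hM : (2 : ℝ) ≤ (m : ℝ) := by exact_mod_cast h2
    have hMpos : (0 : ℝ) < (m : ℝ) := by linarith
    have hMgt1 : (1 : ℝ) < (m : ℝ) := by linarith
    have hM1 : (0 : ℝ) < (m : ℝ) - 1 := by linarith
    calc (m : ℝ) ^ n / (m : ℝ) ^ ((d : ℝ) / ((m : ℝ) - 1))
        = (m : ℝ) ^ n * (m : ℝ) ^ (-(d : ℝ) / ((m : ℝ) - 1)) := by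
          rw [div_eq_mul_inv, ← Real.rpow_neg hMpos.le, neg_div]
      _ ≤ (m : ℝ) ^ n * (m : ℝ) ^ (-(q.totalDegree : ℝ) / ((m : ℝ) - 1)) := by
          refine mul_le_mul_of_nonneg_left ?_ (by positivity)
          refine (Real.rpow_le_rpow_left_iff hMgt1).mpr ?_
          refine (div_le_div_iff_of_pos_right hM1).mpr ?_
          have : (q.totalDegree : ℝ) ≤ (d : ℝ) := by
            exact_mod_cast le_trans hqd hdeg
          linarith
      _ ≤ (F.card : ℝ) := hcount
end

section
/- Let n be a positive integer and f : {0,1}^n → ℂ (equivalently f : (ℤ/2)^n → ℂ) a nonzero function whose Fourier support is contained in the set of z with Hamming weight |z| < d, i.e., f is a polynomial of degree < d. Then f is nonzero at at least 2^{n−d} points of {0,1}^n. -/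
open Finset

private lemma chi_add (a b c : ZMod 2) :
    ((-1:ℂ))^(a.val*(b+c).val) = (-1)^(a.val*b.val) * (-1)^(a.val*c.val) := by
  have h01 : ∀ x : ZMod 2, x = 0 ∨ x = 1 := by decide
  rcases h01 a with rfl | rfl <;> rcases h01 b with rfl | rfl <;> rcases h01 c with rfl | rfl <;>
    simp [ZMod.val_one, show (1 + 1 : ZMod 2) = 0 from rfl]

private lemma sum_chi_single (c : ZMod 2) :
    ∑ b : ZMod 2, ((-1:ℂ))^(b.val * c.val) = if c = 0 then 2 else 0 := by
  have h01 : ∀ x : ZMod 2, x = 0 ∨ x = 1 := by decide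
  rcases h01 c with rfl | rfl <;> rw [show (Finset.univ : Finset (ZMod 2)) = {0, 1} from rfl] <;> norm_num [ZMod.val_one]

private lemma orth_full {ι : Type*} [Fintype ι] [DecidableEq ι] (u : ι → ZMod 2) :
    ∑ z : ι → ZMod 2, ∏ i, ((-1:ℂ))^((z i).val * (u i).val)
      = if ∀ i, u i = 0 then 2^(Fintype.card ι) else 0 := by
  rw [← Fintype.prod_sum fun i (b : ZMod 2) => ((-1:ℂ))^(b.val * (u i).val)]
  by_cases h : ∀ i, u i = 0
  · simp [h, sum_chi_single, Finset.prod_const]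
  · push_neg at h
    obtain ⟨i, hi⟩ := h
    rw [if_neg (by push_neg; exact ⟨i, hi⟩)]
    apply Finset.prod_eq_zero (Finset.mem_univ i)
    rw [sum_chi_single, if_neg hi]

private lemma val_eq_ite (a : ZMod 2) : a.val = if a = 0 then (0:ℕ) else 1 := by
  fin_cases a <;> rfl

private lemma zmod2_add_eq_zero (a b : ZMod 2) : a + b = 0 ↔ a = b := by revert a b; decide

/-- A nonzero function on `{0,1}^n` whose Fourier support consists of points of
Hamming weight `< d` (i.e. a polynomial of degree `< d`) is nonzero on at least
`2^{n-d}` points. -/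
theorem stmt_5 (n d : ℕ) (hn : 0 < n) (f : (Fin n → ZMod 2) → ℂ)
    (hf : f ≠ 0)
    (hsupp : ∀ z : Fin n → ZMod 2, d ≤ ∑ i, (z i).val →
      (2 : ℂ)⁻¹ ^ n * ∑ x, f x * (-1 : ℂ) ^ (∑ i, (z i).val * (x i).val) = 0) :
    2 ^ (n - d) ≤ {x : Fin n → ZMod 2 | f x ≠ 0}.ncard := by
  classical
  set F : (Fin n → ZMod 2) → ℂ :=
    fun z => ∑ x, f x * ∏ i, (-1:ℂ)^((z i).val * (x i).val) with hFdef
  have hFsupp : ∀ z, d ≤ ∑ i, (z i).val → F z = 0 := by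
    intro z hz
    have h0 := hsupp z hz
    have h2 : ((2:ℂ)⁻¹)^n ≠ 0 := pow_ne_zero _ (by norm_num)
    have h1 := (mul_eq_zero.mp h0).resolve_left h2
    rw [hFdef]
    simpa [← Finset.prod_pow_eq_pow_sum] using h1
  -- inversion: F not identically zero
  have key : ∀ x0, ∑ z : Fin n → ZMod 2,
      F z * ∏ i, (-1:ℂ)^((z i).val * (x0 i).val) = 2^n * f x0 := by
    intro x0
    rw [hFdef]
    simp only [Finset.sum_mul]
    rw [Finset.sum_comm]
    have step : ∀ x, ∑ z : Fin n → ZMod 2,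
        f x * (∏ i, (-1:ℂ)^((z i).val * (x i).val)) * ∏ i, (-1:ℂ)^((z i).val * (x0 i).val)
        = f x * (if ∀ i, x i + x0 i = 0 then (2:ℂ)^n else 0) := by
      intro x
      have : ∀ z : Fin n → ZMod 2,
          f x * (∏ i, (-1:ℂ)^((z i).val * (x i).val)) * ∏ i, (-1:ℂ)^((z i).val * (x0 i).val)
          = f x * ∏ i, (-1:ℂ)^((z i).val * ((x i + x0 i)).val) := by
        intro z
        rw [mul_assoc, ← Finset.prod_mul_distrib]
        congr 1
        exact Finset.prod_congr rfl fun i _ => (chi_add (z i) (x i) (x0 i)).symm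
      rw [Finset.sum_congr rfl fun z _ => this z, ← Finset.mul_sum,
        orth_full (fun i => x i + x0 i)]
      simp
    rw [Finset.sum_congr rfl fun x _ => step x]
    have hcond : ∀ x : Fin n → ZMod 2, (∀ i, x i + x0 i = 0) ↔ x = x0 := by
      intro x
      simp only [zmod2_add_eq_zero]
      exact ⟨fun h => funext h, fun h i => congrFun h i⟩
    rw [Finset.sum_congr rfl fun x _ => by rw [if_congr (hcond x) rfl rfl]]
    rw [Finset.sum_eq_single x0 (by intro b _ hb; simp [hb]) (by simp)]
    simp [mul_comm]
  have hex : ∃ z, F z ≠ 0 := by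
    by_contra h
    push_neg at h
    apply hf
    funext x0
    have := key x0
    simp only [h, zero_mul, Finset.sum_const_zero] at this
    have h2 : (2:ℂ)^n ≠ 0 := pow_ne_zero _ two_ne_zero
    simpa using (mul_eq_zero.mp this.symm).resolve_left h2
  -- choose z0 of maximal weight in support of F
  obtain ⟨z0, hz0mem, hz0max⟩ := Finset.exists_max_image
    (Finset.univ.filter (fun z => F z ≠ 0)) (fun z => ∑ i, (z i).val)
    (by obtain ⟨z, hz⟩ := hex; exact ⟨z, Finset.mem_filter.mpr ⟨Finset.mem_univ z, hz⟩⟩)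
  have hz0 : F z0 ≠ 0 := (Finset.mem_filter.mp hz0mem).2
  have hmax : ∀ z, F z ≠ 0 → ∑ i, (z i).val ≤ ∑ i, (z0 i).val := fun z hz =>
    hz0max z (Finset.mem_filter.mpr ⟨Finset.mem_univ z, hz⟩)
  have hwt : ∑ i, (z0 i).val < d := by
    by_contra h
    push_neg at h
    exact hz0 (hFsupp z0 h)
  set ext : ({i : Fin n // z0 i = 0} → ZMod 2) → (Fin n → ZMod 2) :=
    fun v i => if h : z0 i = 0 then v ⟨i, h⟩ else 0 with hext
  -- weight additivity
  have hwt_add : ∀ v : {i : Fin n // z0 i = 0} → ZMod 2,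
      ∑ i, ((z0 + ext v) i).val
        = (∑ i, (z0 i).val) + ∑ j : {i : Fin n // z0 i = 0}, (v j).val := by
    intro v
    have hpt : ∀ i, ((z0 + ext v) i).val
        = (z0 i).val + (if h : z0 i = 0 then (v ⟨i, h⟩).val else 0) := by
      intro i
      by_cases h : z0 i = 0
      · simp [hext, h]
      · simp [hext, h]
    rw [Finset.sum_congr rfl fun i _ => hpt i, Finset.sum_add_distrib]
    congr 1
    rw [← Fintype.sum_subtype_add_sum_subtype (fun i => z0 i = 0)
      (fun i => if h : z0 i = 0 then (v ⟨i, h⟩).val else 0)]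
    have h1 : ∀ j : {x : Fin n // z0 x = 0},
        (if h : z0 j.1 = 0 then (v ⟨j.1, h⟩).val else 0) = (v j).val := fun j => by
      rw [dif_pos j.2]
    have h2 : ∀ j : {x : Fin n // ¬ z0 x = 0},
        (if h : z0 j.1 = 0 then (v ⟨j.1, h⟩).val else 0) = 0 := fun j => dif_neg j.2
    rw [Finset.sum_congr rfl fun j _ => h1 j, Finset.sum_congr rfl fun j _ => h2 j]
    simp
  -- character factorization
  have hchi : ∀ (v : {i : Fin n // z0 i = 0} → ZMod 2) (x : Fin n → ZMod 2),
      (∏ i, (-1:ℂ)^(((z0 + ext v) i).val * (x i).val))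
      = (∏ i, (-1:ℂ)^((z0 i).val * (x i).val)) *
        ∏ j : {i : Fin n // z0 i = 0}, (-1:ℂ)^((v j).val * (x j.1).val) := by
    intro v x
    have hB : (∏ i, (if h : z0 i = 0 then (-1:ℂ)^((v ⟨i,h⟩).val * (x i).val) else 1))
        = ∏ j : {i : Fin n // z0 i = 0}, (-1:ℂ)^((v j).val * (x j.1).val) := by
      rw [← Fintype.prod_subtype_mul_prod_subtype (fun i => z0 i = 0)
        (fun i => if h : z0 i = 0 then (-1:ℂ)^((v ⟨i,h⟩).val * (x i).val) else 1)]
      have h1 : ∀ j : {x : Fin n // z0 x = 0},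
          (if h : z0 j.1 = 0 then (-1:ℂ)^((v ⟨j.1, h⟩).val * (x j.1).val) else 1)
            = (-1:ℂ)^((v j).val * (x j.1).val) := fun j => by rw [dif_pos j.2]
      have h2 : ∀ j : {x : Fin n // ¬ z0 x = 0},
          (if h : z0 j.1 = 0 then (-1:ℂ)^((v ⟨j.1, h⟩).val * (x j.1).val) else 1) = 1 :=
        fun j => dif_neg j.2
      rw [Finset.prod_congr rfl fun j _ => h1 j, Finset.prod_congr rfl fun j _ => h2 j]
      simp
    rw [← hB, ← Finset.prod_mul_distrib]
    refine Finset.prod_congr rfl fun i _ => ?_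
    by_cases h : z0 i = 0
    · simp [hext, h]
    · simp [hext, h]
  -- the fiber lemma
  have hfiber : ∀ y : {i : Fin n // z0 i = 0} → ZMod 2,
      ∃ x, f x ≠ 0 ∧ ∀ j : {i : Fin n // z0 i = 0}, x j.1 = y j := by
    intro y
    have hLHS : ∑ v : {i : Fin n // z0 i = 0} → ZMod 2,
        F (z0 + ext v) * ∏ j : {i : Fin n // z0 i = 0}, (-1:ℂ)^((v j).val * (y j).val)
        = F z0 := by
      rw [Finset.sum_eq_single 0]
      · have : z0 + ext 0 = z0 := by
          funext i
          by_cases h : z0 i = 0 <;> simp [hext, h]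
        simp [this]
      · intro v _ hv
        have hv' : 0 < ∑ j : {i : Fin n // z0 i = 0}, (v j).val := by
          rcases Nat.eq_zero_or_pos (∑ j : {i : Fin n // z0 i = 0}, (v j).val) with h | h
          · exfalso
            apply hv
            funext j
            have := Finset.sum_eq_zero_iff.mp h j (Finset.mem_univ j)
            exact (ZMod.val_eq_zero _).mp this
          · exact h
        have hF0 : F (z0 + ext v) = 0 := by
          by_contra hF0
          have := hmax _ hF0
          rw [hwt_add v] at this
          omega
        simp [hF0]
      · intro h
        exact absurd (Finset.mem_univ 0) h
    have hRHS : ∑ v : {i : Fin n // z0 i = 0} → ZMod 2,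
        F (z0 + ext v) * ∏ j : {i : Fin n // z0 i = 0}, (-1:ℂ)^((v j).val * (y j).val)
        = 2^(Fintype.card {i : Fin n // z0 i = 0}) *
          ∑ x, (if ∀ j : {i : Fin n // z0 i = 0}, x j.1 = y j then
            f x * ∏ i, (-1:ℂ)^((z0 i).val * (x i).val) else 0) := by
      have e1 : ∀ v : {i : Fin n // z0 i = 0} → ZMod 2,
          F (z0 + ext v) * ∏ j : {i : Fin n // z0 i = 0}, (-1:ℂ)^((v j).val * (y j).val)
          = ∑ x, f x * (∏ i, (-1:ℂ)^((z0 i).val * (x i).val)) *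
              ∏ j : {i : Fin n // z0 i = 0}, (-1:ℂ)^((v j).val * ((x j.1 + y j)).val) := by
        intro v
        rw [hFdef]
        simp only [Finset.sum_mul]
        refine Finset.sum_congr rfl fun x _ => ?_
        rw [hchi v x]
        have : (∏ j : {i : Fin n // z0 i = 0}, (-1:ℂ)^((v j).val * ((x j.1 + y j)).val))
            = (∏ j : {i : Fin n // z0 i = 0}, (-1:ℂ)^((v j).val * (x j.1).val)) *
              ∏ j : {i : Fin n // z0 i = 0}, (-1:ℂ)^((v j).val * (y j).val) := by
          rw [← Finset.prod_mul_distrib]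
          exact Finset.prod_congr rfl fun j _ => chi_add _ _ _
        rw [this]
        ring
      rw [Finset.sum_congr rfl fun v _ => e1 v, Finset.sum_comm]
      have e2 : ∀ x : Fin n → ZMod 2, ∑ v : {i : Fin n // z0 i = 0} → ZMod 2,
          f x * (∏ i, (-1:ℂ)^((z0 i).val * (x i).val)) *
            ∏ j : {i : Fin n // z0 i = 0}, (-1:ℂ)^((v j).val * ((x j.1 + y j)).val)
          = (2:ℂ)^(Fintype.card {i : Fin n // z0 i = 0}) *
            (if ∀ j : {i : Fin n // z0 i = 0}, x j.1 = y j then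
              f x * ∏ i, (-1:ℂ)^((z0 i).val * (x i).val) else 0) := by
        intro x
        rw [← Finset.mul_sum, orth_full (fun j : {i : Fin n // z0 i = 0} => x j.1 + y j)]
        simp only [zmod2_add_eq_zero]
        split_ifs with h
        · ring
        · ring
      rw [Finset.sum_congr rfl fun x _ => e2 x, ← Finset.mul_sum]
    rw [hRHS] at hLHS
    by_contra hcon
    push_neg at hcon
    apply hz0
    rw [← hLHS]
    have : ∀ x : Fin n → ZMod 2,
        (if ∀ j : {i : Fin n // z0 i = 0}, x j.1 = y j then
          f x * ∏ i, (-1:ℂ)^((z0 i).val * (x i).val) else 0) = 0 := by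
      intro x
      split_ifs with h
      · by_cases hfx : f x = 0
        · rw [hfx, zero_mul]
        · exact absurd (hcon x hfx) (by push_neg; exact fun j => h j)
      · rfl
    rw [Finset.sum_congr rfl fun x _ => this x]
    simp
  -- counting
  have hcard : (Finset.univ : Finset ({i : Fin n // z0 i = 0} → ZMod 2)).card
      ≤ (Finset.univ.filter (fun x => f x ≠ 0)).card := by
    apply Finset.card_le_card_of_surjOn
      (fun (x : Fin n → ZMod 2) (j : {i : Fin n // z0 i = 0}) => x j.1)
    intro y _
    obtain ⟨x, hx1, hx2⟩ := hfiber y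
    exact ⟨x, by simp [hx1], funext hx2⟩
  have hA : {x : Fin n → ZMod 2 | f x ≠ 0}
      = ↑(Finset.univ.filter (fun x => f x ≠ 0)) := by
    ext x; simp
  rw [hA, Set.ncard_coe_finset]
  refine le_trans ?_ hcard
  rw [Finset.card_univ, Fintype.card_fun]
  have hT : Fintype.card {i : Fin n // z0 i = 0} = n - ∑ i, (z0 i).val := by
    have h1 : Fintype.card {i : Fin n // z0 i = 0}
        = (Finset.univ.filter (fun i => z0 i = 0)).card := Fintype.card_subtype _
    have h2 : ∑ i, (z0 i).val = (Finset.univ.filter (fun i => ¬ z0 i = 0)).card := by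
      rw [Finset.card_filter]
      refine Finset.sum_congr rfl fun i _ => ?_
      rw [val_eq_ite]
      split_ifs with h
      · simp [h]
      · simp [h]
    have h3 := Finset.card_filter_add_card_filter_not
      (s := (Finset.univ : Finset (Fin n))) (p := fun i => z0 i = 0)
    rw [Finset.card_univ, Fintype.card_fin] at h3
    omega
  have hZ : Fintype.card (ZMod 2) = 2 := by simp
  rw [hZ, hT]
  exact Nat.pow_le_pow_right (by norm_num) (by omega)
end

section
/- Let m, n be positive integers and let d ∈ {1,…,(m−1)n} be divisible by m−1. Suppose f : (ℤ/m)^n → ℂ satisfies: f(0) = 1; f(x) = 0 whenever ∑ᵢ xᵢ ≥ d (sum of coordinates taken as natural numbers in {0,…,m−1}); and all Fourier coefficients f̂(z) are nonnegative reals. Then the number of z ∈ (ℤ/m)^n with f̂(z) ≠ 0 is at least m^{n − d/(m−1)}. -/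
open ComplexOrder

/-- The Fourier coefficient of `f : (ℤ/m)^n → ℂ` at `z`, with respect to the
characters `χ_z(x) = ζ_m^{z·x}` where `ζ_m = exp(2πi/m)`. -/
noncomputable def fourierCoeff6 (m n : ℕ) [NeZero m] (f : (Fin n → ZMod m) → ℂ)
    (z : Fin n → ZMod m) : ℂ :=
  (m : ℂ)⁻¹ ^ n * ∑ x : Fin n → ZMod m, f x *
    (starRingEnd ℂ) (Complex.exp (2 * Real.pi * Complex.I / m) ^ (∑ i, (z i).val * (x i).val))

namespace Aux6

open Finset Complex

variable (m : ℕ) [NeZero m]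

noncomputable def ze : ℂ := Complex.exp (2 * Real.pi * Complex.I / m)

lemma ze_prim : IsPrimitiveRoot (ze m) m := Complex.isPrimitiveRoot_exp m (NeZero.ne m)

lemma ze_pow_m : (ze m) ^ m = 1 := (ze_prim m).pow_eq_one

lemma ze_pow_mod (a : ℕ) : ze m ^ a = ze m ^ (a % m) := by
  conv_lhs => rw [← Nat.div_add_mod a m]
  rw [pow_add, pow_mul, ze_pow_m, one_pow, one_mul]

lemma ze_pow_congr {a b : ℕ} (h : a ≡ b [MOD m]) : ze m ^ a = ze m ^ b := by
  rw [ze_pow_mod, Nat.ModEq] at *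
  rw [h, ← ze_pow_mod]

lemma conj_ze : (starRingEnd ℂ) (ze m) = ze m ^ (m - 1) := by
  have h1 : ze m * (starRingEnd ℂ) (ze m) = 1 := by
    rw [ze, ← Complex.exp_conj]
    have : (starRingEnd ℂ) (2 * Real.pi * Complex.I / m) = -(2 * Real.pi * Complex.I / m) := by
      simp only [map_div₀, map_mul, Complex.conj_I, Complex.conj_natCast, map_ofNat,
        Complex.conj_ofReal]
      ring
    rw [this, ← Complex.exp_add, add_neg_cancel, Complex.exp_zero]
  have h2 : ze m * ze m ^ (m - 1) = 1 := by
    rw [← pow_succ', Nat.sub_add_cancel (Nat.one_le_iff_ne_zero.mpr (NeZero.ne m)), ze_pow_m]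
  exact mul_left_cancel₀ (Complex.exp_ne_zero _) (h1.trans h2.symm)

lemma conj_ze_pow (a : ℕ) : (starRingEnd ℂ) (ze m ^ a) = ze m ^ ((m - 1) * a) := by
  rw [map_pow, conj_ze, ← pow_mul]

lemma sum_ze_pow (v : ZMod m) : ∑ c : ZMod m, ze m ^ (v.val * c.val) = if v = 0 then (m : ℂ) else 0 := by
  have hre : ∑ c : ZMod m, ze m ^ (v.val * c.val) = ∑ j ∈ Finset.range m, (ze m ^ v.val) ^ j := by
    refine Finset.sum_nbij' (fun c => c.val) (fun j => (j : ZMod m)) ?_ ?_ ?_ ?_ ?_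
    · intro c _; exact Finset.mem_range.mpr (ZMod.val_lt c)
    · intro j _; exact Finset.mem_univ _
    · intro c _; exact ZMod.natCast_rightInverse c
    · intro j hj; exact ZMod.val_cast_of_lt (Finset.mem_range.mp hj)
    · intro c _; rw [pow_mul]
  rw [hre]
  by_cases hv : v = 0
  · subst hv
    simp [ZMod.val_zero]
  · have hvv : v.val ≠ 0 := fun h => hv (ZMod.val_eq_zero v |>.mp h)
    have hne1 : ze m ^ v.val ≠ 1 :=
      (ze_prim m).pow_ne_one_of_pos_of_lt hvv (ZMod.val_lt v)
    rw [if_neg hv, geom_sum_eq hne1]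
    have : (ze m ^ v.val) ^ m = 1 := by
      rw [← pow_mul, mul_comm, pow_mul, ze_pow_m, one_pow]
    rw [this, sub_self, zero_div]

lemma sum_ze_pair (a b : ZMod m) :
    ∑ c : ZMod m, ze m ^ (a.val * c.val) * (starRingEnd ℂ) (ze m ^ (b.val * c.val))
      = if a = b then (m : ℂ) else 0 := by
  have key : ∀ c : ZMod m, ze m ^ (a.val * c.val) * (starRingEnd ℂ) (ze m ^ (b.val * c.val))
      = ze m ^ ((a - b).val * c.val) := by
    intro c
    rw [conj_ze_pow, ← pow_add]
    apply ze_pow_congr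
    have : ((a.val * c.val + (m - 1) * (b.val * c.val) : ℕ) : ZMod m)
        = (((a - b).val * c.val : ℕ) : ZMod m) := by
      have hm1 : ((m - 1 : ℕ) : ZMod m) = -1 := by
        have h : ((m - 1 : ℕ) : ZMod m) + 1 = ((m : ℕ) : ZMod m) := by
          rw [← Nat.cast_succ, Nat.succ_eq_add_one,
            Nat.sub_add_cancel (Nat.one_le_iff_ne_zero.mpr (NeZero.ne m))]
        rw [ZMod.natCast_self] at h
        linear_combination h
      push_cast
      rw [hm1]
      simp only [ZMod.natCast_val, ZMod.cast_id]
      ring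
    exact (ZMod.natCast_eq_natCast_iff _ _ _).mp this
  simp only [key]
  rw [sum_ze_pow]
  congr 1
  simp [sub_eq_zero, eq_comm]

set_option linter.unusedSectionVars false

noncomputable def ch (N : ℕ) (z x : Fin N → ZMod m) : ℂ := ze m ^ (∑ i, (z i).val * (x i).val)

lemma ch_comm (N : ℕ) (z x : Fin N → ZMod m) : ch m N z x = ch m N x z := by
  unfold ch
  congr 1
  exact Finset.sum_congr rfl fun i _ => mul_comm _ _

lemma ch_zero (N : ℕ) (z : Fin N → ZMod m) : ch m N z 0 = 1 := by
  unfold ch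
  simp [ZMod.val_zero]

lemma ch_cons (N : ℕ) (a c : ZMod m) (z x : Fin N → ZMod m) :
    ch m (N + 1) (Fin.cons a z) (Fin.cons c x) = ze m ^ (a.val * c.val) * ch m N z x := by
  unfold ch
  rw [← pow_add]
  congr 1
  rw [Fin.sum_univ_succ]
  simp [Fin.cons_succ]

lemma sum_pi_succ (N : ℕ) (G : (Fin (N + 1) → ZMod m) → ℂ) :
    ∑ x : Fin (N + 1) → ZMod m, G x
      = ∑ c : ZMod m, ∑ y : Fin N → ZMod m, G (Fin.cons c y) := by
  rw [← Equiv.sum_comp (Fin.consEquiv fun _ => ZMod m) G, Fintype.sum_prod_type]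
  rfl

lemma orthN (N : ℕ) (z w : Fin N → ZMod m) :
    ∑ x : Fin N → ZMod m, ch m N z x * (starRingEnd ℂ) (ch m N w x)
      = if z = w then (m : ℂ) ^ N else 0 := by
  induction N with
  | zero =>
      have hzw : z = w := Subsingleton.elim z w
      simp [hzw, ch]
  | succ N IH =>
      rw [sum_pi_succ]
      rw [← Fin.cons_self_tail z, ← Fin.cons_self_tail w]
      have hterm : ∀ (c : ZMod m) (y : Fin N → ZMod m),
          ch m (N+1) (Fin.cons (z 0) (Fin.tail z)) (Fin.cons c y) *
            (starRingEnd ℂ) (ch m (N+1) (Fin.cons (w 0) (Fin.tail w)) (Fin.cons c y))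
          = (ze m ^ ((z 0).val * c.val) * (starRingEnd ℂ) (ze m ^ ((w 0).val * c.val))) *
            (ch m N (Fin.tail z) y * (starRingEnd ℂ) (ch m N (Fin.tail w) y)) := by
        intro c y
        rw [ch_cons, ch_cons, map_mul]
        ring
      simp only [hterm]
      rw [← Finset.sum_mul_sum]
      rw [sum_ze_pair, IH]
      rcases eq_or_ne (z 0) (w 0) with h0 | h0
      · rcases eq_or_ne (Fin.tail z) (Fin.tail w) with ht | ht
        · rw [if_pos h0, if_pos ht, if_pos (by rw [h0, ht]), pow_succ]
          ring
        · have hne : Fin.cons (z 0) (Fin.tail z) ≠ Fin.cons (w 0) (Fin.tail w) := by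
            intro hc; exact ht (Fin.cons_inj.mp hc).2
          rw [if_pos h0, if_neg ht, if_neg hne, mul_zero]
      · have hne : Fin.cons (z 0) (Fin.tail z) ≠ Fin.cons (w 0) (Fin.tail w) := by
          intro hc; exact h0 (Fin.cons_inj.mp hc).1
        rw [if_neg h0, zero_mul, if_neg hne]

lemma fc_eq (N : ℕ) (f : (Fin N → ZMod m) → ℂ) (z : Fin N → ZMod m) :
    fourierCoeff6 m N f z = (m : ℂ)⁻¹ ^ N * ∑ x, f x * (starRingEnd ℂ) (ch m N z x) := rfl

lemma inv_formula (N : ℕ) (f : (Fin N → ZMod m) → ℂ) (x : Fin N → ZMod m) :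
    f x = ∑ z, fourierCoeff6 m N f z * ch m N z x := by
  have hm : (m : ℂ) ≠ 0 := Nat.cast_ne_zero.mpr (NeZero.ne m)
  simp only [fc_eq]
  have step : ∑ z : Fin N → ZMod m,
        ((m : ℂ)⁻¹ ^ N * ∑ y, f y * (starRingEnd ℂ) (ch m N z y)) * ch m N z x
      = (m : ℂ)⁻¹ ^ N * ∑ y : Fin N → ZMod m, f y * ∑ z : Fin N → ZMod m,
          ch m N x z * (starRingEnd ℂ) (ch m N y z) := by
    have e1 : ∀ z : Fin N → ZMod m,
        ((m : ℂ)⁻¹ ^ N * ∑ y, f y * (starRingEnd ℂ) (ch m N z y)) * ch m N z x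
        = (m : ℂ)⁻¹ ^ N * ∑ y, f y * (ch m N x z * (starRingEnd ℂ) (ch m N y z)) := by
      intro z
      rw [mul_assoc, Finset.sum_mul]
      congr 1
      apply Finset.sum_congr rfl
      intro y _
      rw [ch_comm m N x z, ch_comm m N y z]
      ring
    simp only [e1]
    rw [← Finset.mul_sum, Finset.sum_comm]
    congr 1
    apply Finset.sum_congr rfl
    intro y _
    rw [Finset.mul_sum]
  rw [step]
  simp only [orthN]
  simp only [mul_ite, mul_zero]
  rw [Finset.sum_ite_eq Finset.univ x (fun y => f y * (m : ℂ) ^ N)]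
  simp only [Finset.mem_univ, if_true]
  rw [← mul_assoc, mul_comm ((m:ℂ)⁻¹ ^ N), mul_assoc, ← mul_pow, inv_mul_cancel₀ hm, one_pow,
    mul_one]

lemma coeff_expansion (N : ℕ) (a : (Fin N → ZMod m) → ℂ) (z : Fin N → ZMod m) :
    fourierCoeff6 m N (fun y => ∑ w, a w * ch m N w y) z = a z := by
  have hm : (m : ℂ) ≠ 0 := Nat.cast_ne_zero.mpr (NeZero.ne m)
  rw [fc_eq]
  have step : ∑ x : Fin N → ZMod m,
        (∑ w, a w * ch m N w x) * (starRingEnd ℂ) (ch m N z x)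
      = ∑ w : Fin N → ZMod m, a w * ∑ x : Fin N → ZMod m,
          ch m N w x * (starRingEnd ℂ) (ch m N z x) := by
    simp only [Finset.sum_mul, Finset.mul_sum]
    rw [Finset.sum_comm]
    apply Finset.sum_congr rfl
    intro w _
    apply Finset.sum_congr rfl
    intro x _
    ring
  rw [step]
  simp only [orthN, mul_ite, mul_zero]
  rw [Finset.sum_ite_eq' Finset.univ z (fun w => a w * (m : ℂ) ^ N)]
  simp only [Finset.mem_univ, if_true]
  rw [← mul_assoc, mul_comm ((m:ℂ)⁻¹ ^ N), mul_assoc, ← mul_pow, inv_mul_cancel₀ hm, one_pow,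
    mul_one]

lemma partial_inv (N : ℕ) (f : (Fin (N + 1) → ZMod m) → ℂ) (t : ZMod m) (y : Fin N → ZMod m) :
    ∑ z' : Fin N → ZMod m, fourierCoeff6 m (N + 1) f (Fin.cons t z') * ch m N z' y
      = (m : ℂ)⁻¹ * ∑ c : ZMod m, f (Fin.cons c y) * (starRingEnd ℂ) (ze m ^ (t.val * c.val)) := by
  have hm : (m : ℂ) ≠ 0 := Nat.cast_ne_zero.mpr (NeZero.ne m)
  have expand : ∀ c : ZMod m, f (Fin.cons c y)
      = ∑ u : ZMod m, ∑ z' : Fin N → ZMod m,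
          fourierCoeff6 m (N + 1) f (Fin.cons u z') * (ze m ^ (u.val * c.val) * ch m N z' y) := by
    intro c
    rw [inv_formula m (N + 1) f (Fin.cons c y), sum_pi_succ m N
      (fun z => fourierCoeff6 m (N + 1) f z * ch m (N + 1) z (Fin.cons c y))]
    apply Finset.sum_congr rfl
    intro u _
    apply Finset.sum_congr rfl
    intro z' _
    rw [ch_cons]
  simp only [expand]
  have swap : ∑ c : ZMod m, (∑ u : ZMod m, ∑ z' : Fin N → ZMod m,
        fourierCoeff6 m (N + 1) f (Fin.cons u z') * (ze m ^ (u.val * c.val) * ch m N z' y)) *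
        (starRingEnd ℂ) (ze m ^ (t.val * c.val))
      = ∑ u : ZMod m, ∑ z' : Fin N → ZMod m,
          fourierCoeff6 m (N + 1) f (Fin.cons u z') * ch m N z' y *
            ∑ c : ZMod m, ze m ^ (u.val * c.val) * (starRingEnd ℂ) (ze m ^ (t.val * c.val)) := by
    simp only [Finset.sum_mul, Finset.mul_sum]
    rw [Finset.sum_comm]
    apply Finset.sum_congr rfl
    intro u _
    rw [Finset.sum_comm]
    apply Finset.sum_congr rfl
    intro z' _
    apply Finset.sum_congr rfl
    intro c _
    ring
  rw [swap]
  simp only [sum_ze_pair]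
  have collapse : ∀ u : ZMod m, (∑ z' : Fin N → ZMod m,
        fourierCoeff6 m (N + 1) f (Fin.cons u z') * ch m N z' y *
          (if u = t then (m : ℂ) else 0))
      = if u = t then (∑ z' : Fin N → ZMod m,
          fourierCoeff6 m (N + 1) f (Fin.cons u z') * ch m N z' y) * (m : ℂ) else 0 := by
    intro u
    split_ifs with h
    · rw [Finset.sum_mul]
    · simp
  simp only [collapse]
  rw [Finset.sum_ite_eq' Finset.univ t (fun u => (∑ z' : Fin N → ZMod m,
      fourierCoeff6 m (N + 1) f (Fin.cons u z') * ch m N z' y) * (m : ℂ))]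
  simp only [Finset.mem_univ, if_true]
  rw [mul_comm ((m:ℂ)⁻¹), mul_assoc, mul_inv_cancel₀ hm, mul_one]

open Polynomial in
lemma poly_vanish (u : ℕ) (R : Finset (ZMod m)) (φ : ZMod m → ℂ)
    (hu : u ≤ R.card)
    (hsupp : ∀ c : ZMod m, u ≤ c.val → φ c = 0)
    (hroots : ∀ t ∈ R, ∑ c : ZMod m, φ c * (starRingEnd ℂ) (ze m ^ (t.val * c.val)) = 0) :
    ∀ c : ZMod m, φ c = 0 := by
  rcases Nat.eq_zero_or_pos u with hu0 | hu0
  · intro c; exact hsupp c (by omega)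
  have hum : u ≤ m := hu.trans ((Finset.card_le_univ R).trans (by simp [ZMod.card]))
  set p : ℂ[X] := ∑ j ∈ Finset.range u, C (φ (j : ZMod m)) * X ^ j with hp
  have hsum_eq : ∀ t : ZMod m,
      ∑ c : ZMod m, φ c * (starRingEnd ℂ) (ze m ^ (t.val * c.val))
        = p.eval ((starRingEnd ℂ) (ze m ^ t.val)) := by
    intro t
    have h1 : ∑ c : ZMod m, φ c * (starRingEnd ℂ) (ze m ^ (t.val * c.val))
        = ∑ j ∈ Finset.range m, φ (j : ZMod m) * ((starRingEnd ℂ) (ze m ^ t.val)) ^ j := by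
      refine Finset.sum_nbij' (fun c => c.val) (fun j => (j : ZMod m)) ?_ ?_ ?_ ?_ ?_
      · intro c _; exact Finset.mem_range.mpr (ZMod.val_lt c)
      · intro j _; exact Finset.mem_univ _
      · intro c _; exact ZMod.natCast_rightInverse c
      · intro j hj; exact ZMod.val_cast_of_lt (Finset.mem_range.mp hj)
      · intro c _
        rw [ZMod.natCast_rightInverse c, ← map_pow, ← pow_mul]
    rw [h1]
    rw [← Finset.sum_subset (Finset.range_subset_range.mpr hum)]
    · rw [hp, eval_finset_sum]
      apply Finset.sum_congr rfl
      intro j _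
      simp
    · intro j hj hnj
      have hjm : j < m := Finset.mem_range.mp hj
      have hju : u ≤ j := by
        by_contra hlt
        exact hnj (Finset.mem_range.mpr (by omega))
      have : u ≤ ((j : ZMod m)).val := by rw [ZMod.val_cast_of_lt hjm]; omega
      rw [hsupp _ this, zero_mul]
  have hinj : Set.InjOn (fun t : ZMod m => (starRingEnd ℂ) (ze m ^ t.val)) R := by
    intro t1 _ t2 _ h
    have h2 : ze m ^ t1.val = ze m ^ t2.val := by
      have := congrArg (starRingEnd ℂ) h
      simpa using this
    exact ZMod.val_injective m ((ze_prim m).pow_inj (ZMod.val_lt t1) (ZMod.val_lt t2) h2)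
  have hdeg : p.natDegree < u := by
    have : p.natDegree ≤ u - 1 := by
      apply Polynomial.natDegree_sum_le_of_forall_le
      intro j hj
      exact (Polynomial.natDegree_C_mul_X_pow_le _ _).trans
        (by have := Finset.mem_range.mp hj; omega)
    omega
  have hp0 : p = 0 := by
    apply Polynomial.eq_zero_of_natDegree_lt_card_of_eval_eq_zero' p
      (R.image (fun t : ZMod m => (starRingEnd ℂ) (ze m ^ t.val)))
    · intro x hx
      obtain ⟨t, ht, rfl⟩ := Finset.mem_image.mp hx
      rw [← hsum_eq]
      exact hroots t ht
    · rw [Finset.card_image_of_injOn hinj]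
      exact hdeg.trans_le hu
  have hcoeff : ∀ j, j < u → φ ((j : ZMod m)) = 0 := by
    intro j hj
    have := congrArg (fun q => Polynomial.coeff q j) hp0
    simp only [hp] at this
    rw [Polynomial.finset_sum_coeff] at this
    simp only [Polynomial.coeff_C_mul, Polynomial.coeff_X_pow, mul_ite, mul_one, mul_zero] at this
    rw [Finset.sum_ite_eq (Finset.range u) j (fun i => φ ((i : ℕ) : ZMod m))] at this
    simpa [hj] using this
  intro c
  rcases Nat.lt_or_ge c.val u with hc | hc
  · have := hcoeff c.val hc
    rwa [ZMod.natCast_rightInverse c] at this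
  · exact hsupp c hc

lemma log_ineq {S M : ℝ} (hS : 1 ≤ S) (hSM : S ≤ M) :
    (S - 1) * Real.log M ≤ (M - 1) * Real.log S := by
  rcases eq_or_lt_of_le hS with h1 | h1
  · rw [← h1]; simp
  have hS0 : 0 < S := by linarith
  have hM0 : 0 < M := by linarith
  have hlogMS : Real.log M = Real.log S + Real.log (M / S) := by
    rw [Real.log_div (by linarith) (by linarith)]; ring
  have h2 : Real.log (M / S) ≤ (M - S) / S := by
    have := Real.log_le_sub_one_of_pos (show (0:ℝ) < M / S by positivity)
    have heq : M / S - 1 = (M - S) / S := by field_simp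
    linarith
  have h3 : 1 - 1 / S ≤ Real.log S := by
    have := Real.log_le_sub_one_of_pos (show (0:ℝ) < 1 / S by positivity)
    rw [one_div, Real.log_inv] at this
    have : -Real.log S ≤ S⁻¹ - 1 := this
    have hinv : 1 / S = S⁻¹ := one_div S
    linarith [this]
  have hA : (S - 1) * Real.log (M / S) ≤ (S - 1) * ((M - S) / S) :=
    mul_le_mul_of_nonneg_left h2 (by linarith)
  have hB : (M - S) * (1 - 1 / S) ≤ (M - S) * Real.log S :=
    mul_le_mul_of_nonneg_left h3 (by linarith)
  have heq2 : (S - 1) * ((M - S) / S) = (M - S) * (1 - 1 / S) := by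
    field_simp
  have hex : (S - 1) * Real.log M = (S - 1) * Real.log S + (S - 1) * Real.log (M / S) := by
    rw [hlogMS]; ring
  have hex2 : (M - 1) * Real.log S = (S - 1) * Real.log S + (M - S) * Real.log S := by ring
  linarith

lemma rpow_card_le {sN mN : ℕ} (hs1 : 1 ≤ sN) (hsm : sN ≤ mN) :
    (mN : ℝ) ^ (((sN : ℝ) - 1) / ((mN : ℝ) - 1)) ≤ (sN : ℝ) := by
  have hS : (1:ℝ) ≤ sN := by exact_mod_cast hs1
  have hSM : (sN:ℝ) ≤ mN := by exact_mod_cast hsm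
  have hM1 : (1:ℝ) ≤ mN := le_trans hS hSM
  rcases eq_or_lt_of_le hM1 with h1 | h1
  · have hs : (sN:ℝ) = 1 := le_antisymm (h1 ▸ hSM) hS
    rw [← h1, hs]
    simp
  have hMpos : (0:ℝ) < mN := by linarith
  have hSpos : (0:ℝ) < sN := by linarith
  rw [Real.rpow_def_of_pos hMpos]
  conv_rhs => rw [← Real.exp_log hSpos]
  apply Real.exp_le_exp.mpr
  rw [mul_div_assoc']
  rw [div_le_iff₀ (by linarith : (0:ℝ) < (mN:ℝ) - 1)]
  have := log_ineq hS hSM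
  calc Real.log mN * ((sN:ℝ) - 1) = ((sN:ℝ) - 1) * Real.log mN := by ring
    _ ≤ ((mN:ℝ) - 1) * Real.log sN := this
    _ = Real.log sN * ((mN:ℝ) - 1) := by ring

lemma nonneg_eq_re {w : ℂ} (h : 0 ≤ w) : w = ((w.re : ℝ) : ℂ) := by
  obtain ⟨h1, h2⟩ := Complex.nonneg_iff.mp h
  apply Complex.ext
  · simp
  · simp [← h2]

lemma nonneg_re {w : ℂ} (h : 0 ≤ w) : 0 ≤ w.re := (Complex.nonneg_iff.mp h).1

lemma fc_const_mul (N : ℕ) (a : ℂ) (g : (Fin N → ZMod m) → ℂ) (z : Fin N → ZMod m) :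
    fourierCoeff6 m N (fun y => a * g y) z = a * fourierCoeff6 m N g z := by
  unfold fourierCoeff6
  have : ∑ x : Fin N → ZMod m, (a * g x) *
        (starRingEnd ℂ) (Complex.exp (2 * Real.pi * Complex.I / m) ^ (∑ i, (z i).val * (x i).val))
      = a * ∑ x : Fin N → ZMod m, g x *
        (starRingEnd ℂ) (Complex.exp (2 * Real.pi * Complex.I / m) ^ (∑ i, (z i).val * (x i).val)) := by
    rw [Finset.mul_sum]
    exact Finset.sum_congr rfl fun x _ => by ring
  rw [this]
  ring

open scoped Classical in
lemma main_bound (hm2 : 2 ≤ m) : ∀ N d : ℕ, ∀ f : (Fin N → ZMod m) → ℂ,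
    (∀ z, 0 ≤ fourierCoeff6 m N f z) → (0 < f 0) →
    (∀ x : Fin N → ZMod m, d ≤ ∑ i, (x i).val → f x = 0) →
    (m : ℝ) ^ ((N : ℝ) - (d : ℝ) / ((m : ℝ) - 1)) ≤
      ((Finset.univ.filter (fun z : Fin N → ZMod m => fourierCoeff6 m N f z ≠ 0)).card : ℝ) := by
  have hm1R : (1:ℝ) ≤ m := by exact_mod_cast Nat.one_le_of_lt hm2
  have hm2R : (2:ℝ) ≤ m := by exact_mod_cast hm2
  have hmposR : (0:ℝ) < m := by linarith
  intro N
  induction N with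
  | zero =>
      intro d f hpos hf0 hvan
      have hd0 : d ≠ 0 := by
        rintro rfl
        have h := hvan 0 (by simp)
        rw [h] at hf0
        exact lt_irrefl 0 hf0
      have hex : ∃ z : Fin 0 → ZMod m, fourierCoeff6 m 0 f z ≠ 0 := by
        by_contra hall
        push_neg at hall
        have : f 0 = 0 := by
          rw [inv_formula m 0 f 0]
          exact Finset.sum_eq_zero fun z _ => by rw [hall z, zero_mul]
        rw [this] at hf0
        exact lt_irrefl 0 hf0
      obtain ⟨z0, hz0⟩ := hex
      have hcard : 1 ≤ ((Finset.univ.filter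
          (fun z : Fin 0 → ZMod m => fourierCoeff6 m 0 f z ≠ 0)).card : ℝ) := by
        have : (Finset.univ.filter
            (fun z : Fin 0 → ZMod m => fourierCoeff6 m 0 f z ≠ 0)).Nonempty :=
          ⟨z0, Finset.mem_filter.mpr ⟨Finset.mem_univ _, hz0⟩⟩
        exact_mod_cast Finset.card_pos.mpr this
      refine le_trans ?_ hcard
      apply Real.rpow_le_one_of_one_le_of_nonpos hm1R
      have : (0:ℝ) ≤ (d : ℝ) / ((m : ℝ) - 1) :=
        div_nonneg (Nat.cast_nonneg d) (by linarith)
      simp only [Nat.cast_zero]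
      linarith
  | succ N IH =>
      intro d f hpos hf0 hvan
      set fc := fourierCoeff6 m (N+1) f with hfc
      set T : Finset (ZMod m) := Finset.univ.filter
        (fun t => ∃ z' : Fin N → ZMod m, fc (Fin.cons t z') ≠ 0) with hT
      set s := T.card with hs
      set H : ZMod m → (Fin N → ZMod m) → ℂ :=
        fun t y => ∑ z', fc (Fin.cons t z') * ch m N z' y with hH
      have hHcoeff : ∀ (t : ZMod m) (z' : Fin N → ZMod m),
          fourierCoeff6 m N (H t) z' = fc (Fin.cons t z') :=
        fun t z' => coeff_expansion m N (fun w => fc (Fin.cons t w)) z'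
      have hPI : ∀ (t : ZMod m) (y : Fin N → ZMod m),
          H t y = (m : ℂ)⁻¹ * ∑ c : ZMod m, f (Fin.cons c y) *
            (starRingEnd ℂ) (ze m ^ (t.val * c.val)) :=
        fun t y => partial_inv m N f t y
      have hTne : T.Nonempty := by
        by_contra hemp
        rw [Finset.not_nonempty_iff_eq_empty] at hemp
        have hall : ∀ z, fc z = 0 := by
          intro z
          by_contra hnz
          have hmem : z 0 ∈ T := Finset.mem_filter.mpr
            ⟨Finset.mem_univ _, ⟨Fin.tail z, by rw [Fin.cons_self_tail]; exact hnz⟩⟩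
          rw [hemp] at hmem
          exact absurd hmem (Finset.notMem_empty _)
        have hzero : f 0 = 0 := by
          rw [inv_formula m (N+1) f 0]
          refine Finset.sum_eq_zero fun z _ => ?_
          have hz := hall z
          rw [hfc] at hz
          rw [hz, zero_mul]
        rw [hzero] at hf0
        exact lt_irrefl 0 hf0
      have hs1 : 1 ≤ s := Finset.card_pos.mpr hTne
      have hsm : s ≤ m := by
        rw [hs]
        calc T.card ≤ Finset.univ.card := Finset.card_le_univ T
          _ = m := by rw [Finset.card_univ, ZMod.card]
      have hwt_cons : ∀ (c : ZMod m) (y : Fin N → ZMod m),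
          (∑ i, ((Fin.cons c y : Fin (N+1) → ZMod m) i).val) = c.val + ∑ i, (y i).val := by
        intro c y
        rw [Fin.sum_univ_succ]
        simp [Fin.cons_succ]
      have hkey : ∀ y : Fin N → ZMod m, d ≤ (m - s) + ∑ i, (y i).val →
          ∀ c : ZMod m, f (Fin.cons c y) = 0 := by
        intro y hy
        apply poly_vanish m (d - ∑ i, (y i).val) Tᶜ (fun c => f (Fin.cons c y))
        · rw [Finset.card_compl, ZMod.card, ← hs]
          omega
        · intro c hc
          apply hvan
          rw [hwt_cons]
          omega
        · intro t ht
          have htT : t ∉ T := Finset.mem_compl.mp ht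
          have hH0 : H t y = 0 := by
            rw [hH]
            apply Finset.sum_eq_zero
            intro z' _
            have hz : fc (Fin.cons t z') = 0 := by
              by_contra hnz
              exact htT (Finset.mem_filter.mpr ⟨Finset.mem_univ _, ⟨z', hnz⟩⟩)
            rw [hz, zero_mul]
          have heq : (m:ℂ)⁻¹ * ∑ c : ZMod m, f (Fin.cons c y) *
              (starRingEnd ℂ) (ze m ^ (t.val * c.val)) = 0 := by
            rw [← hPI t y]
            exact hH0
          have hmne : (m : ℂ)⁻¹ ≠ 0 :=
            inv_ne_zero (Nat.cast_ne_zero.mpr (NeZero.ne m))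
          rcases mul_eq_zero.mp heq with h | h
          · exact absurd h hmne
          · exact h
      have hkeyH : ∀ (t : ZMod m) (y : Fin N → ZMod m),
          d ≤ (m - s) + ∑ i, (y i).val → H t y = 0 := by
        intro t y hy
        rw [hPI t y, Finset.sum_eq_zero (fun c _ => by rw [hkey y hy c, zero_mul]), mul_zero]
      have hH0eq : ∀ t : ZMod m, H t 0 = ∑ z', fc (Fin.cons t z') := by
        intro t
        rw [hH]
        exact Finset.sum_congr rfl fun z' _ => by rw [ch_zero, mul_one]
      have hH0pos : ∀ t ∈ T, 0 < H t 0 := by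
        intro t ht
        rw [hH0eq t]
        have hre : ∀ z' : Fin N → ZMod m,
            fc (Fin.cons t z') = (((fc (Fin.cons t z')).re : ℝ) : ℂ) :=
          fun z' => nonneg_eq_re (hpos _)
        have hsum : ∑ z', fc (Fin.cons t z')
            = (((∑ z', (fc (Fin.cons t z')).re : ℝ)) : ℂ) := by
          rw [Complex.ofReal_sum]
          exact Finset.sum_congr rfl fun z' _ => hre z'
        rw [hsum]
        rw [Complex.zero_lt_real]
        obtain ⟨z0, hz0⟩ := (Finset.mem_filter.mp ht).2
        apply Finset.sum_pos' (fun z' _ => nonneg_re (hpos _))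
        refine ⟨z0, Finset.mem_univ _, ?_⟩
        have := nonneg_re (hpos (Fin.cons t z0))
        rcases lt_or_eq_of_le this with h | h
        · exact h
        · exfalso
          apply hz0
          rw [nonneg_eq_re (hpos (Fin.cons t z0)), ← h]
          simp
      rcases Nat.lt_or_ge (m - s) d with hds | hds
      swap
      · exfalso
        obtain ⟨t, ht⟩ := hTne
        have h0 : H t 0 = 0 := by
          apply hkeyH t 0
          have : (∑ i, ((0 : Fin N → ZMod m) i).val) = 0 := by simp
          omega
        have := hH0pos t ht
        rw [h0] at this
        exact lt_irrefl 0 this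
      set d' := d - (m - s) with hd'
      have hslice : ∀ t ∈ T, (m:ℝ) ^ ((N:ℝ) - (d':ℝ)/((m:ℝ)-1)) ≤
          ((Finset.univ.filter (fun z' : Fin N → ZMod m => fc (Fin.cons t z') ≠ 0)).card : ℝ) := by
        intro t ht
        have hApos : 0 < H t 0 := hH0pos t ht
        set A := H t 0 with hA
        have hAne : A ≠ 0 := ne_of_gt hApos
        have hAre : A = ((A.re : ℝ) : ℂ) := nonneg_eq_re (le_of_lt hApos)
        have hArepos : 0 < A.re := (Complex.pos_iff.mp hApos).1
        set g : (Fin N → ZMod m) → ℂ := fun y => A⁻¹ * H t y with hg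
        have hgc : ∀ z', fourierCoeff6 m N g z' = A⁻¹ * fc (Fin.cons t z') := by
          intro z'
          rw [hg]
          rw [fc_const_mul m N A⁻¹ (H t) z', hHcoeff]
        have hbound := IH d' g
          (by
            intro z'
            rw [hgc z']
            rw [nonneg_eq_re (hpos (Fin.cons t z')), hAre]
            rw [← Complex.ofReal_inv, ← Complex.ofReal_mul]
            rw [Complex.zero_le_real]
            have := nonneg_re (hpos (Fin.cons t z'))
            positivity)
          (by
            rw [hg]
            simp only
            rw [← hA, inv_mul_cancel₀ hAne]
            rw [Complex.pos_iff]
            simp)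
          (by
            intro y hy
            rw [hg]
            simp only
            rw [hkeyH t y (by omega), mul_zero])
        have hsetseq : Finset.univ.filter (fun z' : Fin N → ZMod m => fourierCoeff6 m N g z' ≠ 0)
            = Finset.univ.filter (fun z' : Fin N → ZMod m => fc (Fin.cons t z') ≠ 0) := by
          apply Finset.filter_congr
          intro z' _
          rw [hgc z']
          constructor
          · intro h hzero
            exact h (by rw [hzero, mul_zero])
          · intro h
            exact mul_ne_zero (inv_ne_zero hAne) h
        rwa [hsetseq] at hbound
      -- counting
      have hcount : (∑ t ∈ T, (Finset.univ.filter
            (fun z' : Fin N → ZMod m => fc (Fin.cons t z') ≠ 0)).card)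
          ≤ (Finset.univ.filter (fun z : Fin (N+1) → ZMod m => fc z ≠ 0)).card := by
        set B : ZMod m → Finset (Fin (N+1) → ZMod m) :=
          fun t => (Finset.univ.filter
            (fun z' : Fin N → ZMod m => fc (Fin.cons t z') ≠ 0)).image (Fin.cons t) with hB
        have hBcard : ∀ t, (B t).card = (Finset.univ.filter
            (fun z' : Fin N → ZMod m => fc (Fin.cons t z') ≠ 0)).card := by
          intro t
          rw [hB]
          exact Finset.card_image_of_injective _
            (Fin.cons_right_injective (α := fun _ : Fin (N+1) => ZMod m) t)
        have hdisj : ∀ t1 ∈ T, ∀ t2 ∈ T, t1 ≠ t2 → Disjoint (B t1) (B t2) := by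
          intro t1 _ t2 _ hne
          rw [Finset.disjoint_left]
          intro z hz1 hz2
          obtain ⟨w1, _, rfl⟩ := Finset.mem_image.mp hz1
          obtain ⟨w2, _, hw2⟩ := Finset.mem_image.mp hz2
          apply hne
          have := congrArg (fun v => v 0) hw2
          simpa [Fin.cons_zero] using this.symm
        calc ∑ t ∈ T, (Finset.univ.filter
              (fun z' : Fin N → ZMod m => fc (Fin.cons t z') ≠ 0)).card
            = ∑ t ∈ T, (B t).card := by
              exact Finset.sum_congr rfl fun t _ => (hBcard t).symm
          _ = (T.biUnion B).card := (Finset.card_biUnion hdisj).symm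
          _ ≤ _ := by
              apply Finset.card_le_card
              intro z hz
              obtain ⟨t, _, hzB⟩ := Finset.mem_biUnion.mp hz
              obtain ⟨w, hw, rfl⟩ := Finset.mem_image.mp hzB
              exact Finset.mem_filter.mpr ⟨Finset.mem_univ _,
                (Finset.mem_filter.mp hw).2⟩
      -- final arithmetic
      have hcastd' : (d' : ℝ) = (d : ℝ) - ((m : ℝ) - (s : ℝ)) := by
        rw [hd']
        have h1 : (m - s : ℕ) ≤ d := le_of_lt hds
        push_cast [Nat.cast_sub h1, Nat.cast_sub hsm]
        ring
      have hexp : ((N:ℝ) + 1) - (d:ℝ)/((m:ℝ)-1)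
          = ((s:ℝ) - 1)/((m:ℝ)-1) + ((N:ℝ) - (d':ℝ)/((m:ℝ)-1)) := by
        rw [hcastd']
        have hm1ne : (m:ℝ) - 1 ≠ 0 := by
          have : (2:ℝ) ≤ m := by exact_mod_cast hm2
          linarith
        field_simp
        ring
      rw [show ((N+1 : ℕ) : ℝ) = (N:ℝ) + 1 from by push_cast; ring]
      have harith : (m:ℝ) ^ (((N:ℝ)+1) - (d:ℝ)/((m:ℝ)-1))
          ≤ (s:ℝ) * (m:ℝ) ^ ((N:ℝ) - (d':ℝ)/((m:ℝ)-1)) := by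
        rw [hexp, Real.rpow_add hmposR]
        apply mul_le_mul_of_nonneg_right
        · exact rpow_card_le hs1 hsm
        · exact Real.rpow_nonneg (le_of_lt hmposR) _
      calc (m:ℝ) ^ (((N:ℝ)+1) - (d:ℝ)/((m:ℝ)-1))
          ≤ (s:ℝ) * (m:ℝ) ^ ((N:ℝ) - (d':ℝ)/((m:ℝ)-1)) := harith
        _ = ∑ _t ∈ T, (m:ℝ) ^ ((N:ℝ) - (d':ℝ)/((m:ℝ)-1)) := by
            rw [Finset.sum_const, nsmul_eq_mul, hs]
        _ ≤ ∑ t ∈ T, ((Finset.univ.filter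
              (fun z' : Fin N → ZMod m => fc (Fin.cons t z') ≠ 0)).card : ℝ) :=
            Finset.sum_le_sum hslice
        _ = ((∑ t ∈ T, (Finset.univ.filter
              (fun z' : Fin N → ZMod m => fc (Fin.cons t z') ≠ 0)).card : ℕ) : ℝ) := by
            push_cast
            rfl
        _ ≤ _ := Nat.cast_le.mpr hcount

end Aux6

/-- Lower bound for the symmetric orthogonal rank: a normalized function on
`(ℤ/m)^n` vanishing on weight `≥ d` with nonnegative Fourier coefficients has
at least `m^{n - d/(m-1)}` nonzero Fourier coefficients. -/
theorem stmt_6 (m n d : ℕ) [NeZero m] (hn : 0 < n)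
    (hd1 : 1 ≤ d) (hd2 : d ≤ (m - 1) * n) (hdvd : (m - 1) ∣ d)
    (f : (Fin n → ZMod m) → ℂ)
    (hf0 : f 0 = 1)
    (hvanish : ∀ x : Fin n → ZMod m, d ≤ ∑ i, (x i).val → f x = 0)
    (hpos : ∀ z : Fin n → ZMod m, 0 ≤ fourierCoeff6 m n f z) :
    m ^ (n - d / (m - 1)) ≤ {z : Fin n → ZMod m | fourierCoeff6 m n f z ≠ 0}.ncard := by
  classical
  have hm0 : m ≠ 0 := NeZero.ne m
  have hm2 : 2 ≤ m := by
    by_contra h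
    push_neg at h
    have hm1 : m = 1 := by omega
    subst hm1
    simp at hd2
    omega
  set k := d / (m - 1) with hk
  have hdk : (m - 1) * k = d := Nat.mul_div_cancel' hdvd
  have hkn : k ≤ n := by
    have h1 : (m - 1) * k ≤ (m - 1) * n := by rw [hdk]; exact hd2
    exact Nat.le_of_mul_le_mul_left h1 (by omega)
  have hf0pos : 0 < f 0 := by
    rw [hf0]
    rw [Complex.pos_iff]
    simp
  have key := Aux6.main_bound m hm2 n d f hpos hf0pos hvanish
  have hm1ne : ((m - 1 : ℕ) : ℝ) ≠ 0 := by
    have : (1:ℕ) ≤ m - 1 := by omega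
    exact_mod_cast Nat.one_le_iff_ne_zero.mp this
  have hm1R : ((m - 1 : ℕ) : ℝ) = (m : ℝ) - 1 := by
    push_cast [Nat.cast_sub (by omega : 1 ≤ m)]
    ring
  have hcast : (d : ℝ) / ((m : ℝ) - 1) = (k : ℝ) := by
    rw [← hm1R, ← hdk]
    push_cast
    rw [mul_comm, mul_div_assoc, div_self hm1ne, mul_one]
  have hexp : (n : ℝ) - (d : ℝ) / ((m : ℝ) - 1) = ((n - k : ℕ) : ℝ) := by
    rw [hcast]
    push_cast [Nat.cast_sub hkn]
    ring
  rw [hexp, Real.rpow_natCast] at key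
  have hset : {z : Fin n → ZMod m | fourierCoeff6 m n f z ≠ 0}.ncard
      = (Finset.univ.filter (fun z : Fin n → ZMod m => fourierCoeff6 m n f z ≠ 0)).card := by
    rw [← Set.ncard_coe_finset]
    congr 1
    ext z
    simp
  rw [hset]
  exact_mod_cast key
end

section
/- Let n be a positive integer, S ⊆ {0,1,…,n} a set of size at least n/2 (more precisely, of size exceeding the degree of p), and p a real polynomial of degree < |S|. Then p(0) ≤ (∑_{i=0}^n C(n,i)|p(i)|) · max_{i∈S} [ C(n,i)⁻¹ · ∏_{ℓ∈S∖{i}} ℓ/|ℓ−i| ]. -/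
open Finset

/-- Lagrange interpolation bound: for a set `S ⊆ {0,…,n}` of size at least `n/2`
and exceeding the degree of `p`,
`p(0) ≤ (∑_i C(n,i)|p(i)|) · max_{i∈S} C(n,i)⁻¹ ∏_{ℓ∈S∖{i}} ℓ/|ℓ-i|`. -/
theorem stmt_11 (n : ℕ) (hn : 0 < n) (S : Finset ℕ) (hSsub : S ⊆ range (n + 1))
    (hScard : n ≤ 2 * S.card) (hne : S.Nonempty)
    (p : Polynomial ℝ) (hdeg : p.degree < (S.card : ℕ)) :
    p.eval 0 ≤ (∑ i ∈ range (n + 1), (n.choose i : ℝ) * |p.eval (i : ℝ)|) *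
      S.sup' hne (fun i => ((n.choose i : ℝ))⁻¹ *
        ∏ ℓ ∈ S.erase i, (ℓ : ℝ) / |(ℓ : ℝ) - (i : ℝ)|) := by
  classical
  have hinj : Set.InjOn (fun i : ℕ => (i : ℝ)) S := fun a _ b _ h => Nat.cast_injective h
  set f : ℕ → ℝ := fun i => ((n.choose i : ℝ))⁻¹ *
        ∏ ℓ ∈ S.erase i, (ℓ : ℝ) / |(ℓ : ℝ) - (i : ℝ)| with hf
  have hf0 : ∀ i, 0 ≤ f i := fun i => mul_nonneg (inv_nonneg.2 (Nat.cast_nonneg _))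
      (Finset.prod_nonneg fun ℓ _ => div_nonneg (Nat.cast_nonneg _) (abs_nonneg _))
  have hM0 : 0 ≤ S.sup' hne f :=
    le_trans (hf0 hne.choose) (le_sup' f hne.choose_spec)
  have key : p.eval 0 = ∑ i ∈ S, p.eval (i : ℝ) *
      ∏ ℓ ∈ S.erase i, (((i : ℝ) - (ℓ : ℝ))⁻¹ * (0 - (ℓ : ℝ))) := by
    conv_lhs => rw [Lagrange.eq_interpolate hinj hdeg]
    simp [Lagrange.interpolate_apply, Lagrange.basis, Lagrange.basisDivisor,
      Polynomial.eval_finset_sum, Polynomial.eval_prod]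
  calc p.eval 0 ≤ |p.eval 0| := le_abs_self _
    _ ≤ ∑ i ∈ S, |p.eval (i : ℝ)| *
        ∏ ℓ ∈ S.erase i, (ℓ : ℝ) / |(ℓ : ℝ) - (i : ℝ)| := by
        rw [key]
        refine (Finset.abs_sum_le_sum_abs _ _).trans (Finset.sum_le_sum fun i hi => ?_)
        rw [abs_mul, Finset.abs_prod]
        refine mul_le_mul_of_nonneg_left (le_of_eq ?_) (abs_nonneg _)
        refine Finset.prod_congr rfl fun ℓ hℓ => ?_
        rw [abs_mul, abs_inv, abs_sub_comm, zero_sub, abs_neg, Nat.abs_cast,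
          inv_mul_eq_div]
    _ = ∑ i ∈ S, ((n.choose i : ℝ) * |p.eval (i : ℝ)|) * f i := by
        refine Finset.sum_congr rfl fun i hi => ?_
        have hin : i ≤ n := Nat.lt_succ_iff.mp (mem_range.mp (hSsub hi))
        have hC : (n.choose i : ℝ) ≠ 0 := by
          exact_mod_cast (Nat.choose_pos hin).ne'
        rw [hf]
        rw [show ((n.choose i : ℝ) * |p.eval (i : ℝ)|) * ((n.choose i : ℝ)⁻¹ *
            ∏ ℓ ∈ S.erase i, (ℓ : ℝ) / |(ℓ : ℝ) - (i : ℝ)|) =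
            ((n.choose i : ℝ) * (n.choose i : ℝ)⁻¹) * (|p.eval (i : ℝ)| *
            ∏ ℓ ∈ S.erase i, (ℓ : ℝ) / |(ℓ : ℝ) - (i : ℝ)|) from by ring,
          mul_inv_cancel₀ hC, one_mul]
    _ ≤ ∑ i ∈ S, ((n.choose i : ℝ) * |p.eval (i : ℝ)|) * S.sup' hne f :=
        Finset.sum_le_sum fun i hi => mul_le_mul_of_nonneg_left (le_sup' f hi)
          (mul_nonneg (Nat.cast_nonneg _) (abs_nonneg _))
    _ = (∑ i ∈ S, (n.choose i : ℝ) * |p.eval (i : ℝ)|) * S.sup' hne f := by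
        rw [← Finset.sum_mul]
    _ ≤ _ := mul_le_mul_of_nonneg_right (Finset.sum_le_sum_of_subset_of_nonneg hSsub
        fun i _ _ => mul_nonneg (Nat.cast_nonneg _) (abs_nonneg _)) hM0
end

section
/- Let k be a positive integer, n = 8k, S₁ = (n/8, 3n/8] ∩ ℕ, S₂ = [5n/8, 7n/8) ∩ ℕ, S = S₁ ∪ S₂, and let j ∈ {1,2,3} with i = jk ∈ S₁. Then C(n,i)⁻¹ · ∏_{ℓ∈S∖{i}} ℓ/|ℓ−i| ≤ [C(3k, jk)·C(7k−1, jk)·C(jk, k)] / [C(5k−1, jk)·C(8k, jk)]. -/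
open Finset

lemma fact_mul_prod_Ioc (a b : ℕ) (h : a ≤ b) :
    a.factorial * ∏ ℓ ∈ Ioc a b, ℓ = b.factorial := by
  induction b, h using Nat.le_induction with
  | base => simp
  | succ b hb ih =>
      rw [Finset.prod_Ioc_succ_top hb, ← mul_assoc, ih, Nat.factorial_succ]; ring

lemma prod_Ioc_sub (c a b : ℕ) (hca : c ≤ a) (hab : a ≤ b) :
    ∏ ℓ ∈ Ioc a b, (ℓ - c) = ∏ m ∈ Ioc (a - c) (b - c), m := by
  have h1 : Ioc a b = (Ioc (a - c) (b - c)).map (addLeftEmbedding c) := by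
    rw [Finset.map_add_left_Ioc]
    congr 1 <;> omega
  rw [h1, Finset.prod_map]
  refine Finset.prod_congr rfl fun m hm => ?_
  simp [addLeftEmbedding]

lemma prod_Ioo_rev (a b : ℕ) : ∏ ℓ ∈ Ioo a b, (b - ℓ) = (b - a - 1).factorial := by
  have h1 : ∏ ℓ ∈ Ioo a b, (b - ℓ) = ∏ m ∈ Ioo 0 (b - a), m := by
    refine Finset.prod_nbij' (fun ℓ => b - ℓ) (fun m => b - m) ?_ ?_ ?_ ?_ ?_ <;>
      intro x hx <;> simp only [Finset.mem_Ioo] at * <;> omega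
  rw [h1]
  have h2 : Ioo 0 (b - a) = Ioc 0 (b - a - 1) := by ext x; simp; omega
  rw [h2]
  have := fact_mul_prod_Ioc 0 (b - a - 1) (Nat.zero_le _)
  simpa using this

/-- With `n = 8k`, `S₁ = (k, 3k] ∩ ℕ`, `S₂ = [5k, 7k) ∩ ℕ`, `S = S₁ ∪ S₂`, and
`i = jk ∈ S₁` for `j ∈ {1,2,3}`, we have
`C(n,i)⁻¹ ∏_{ℓ∈S∖{i}} ℓ/|ℓ-i| ≤ C(3k,jk) C(7k-1,jk) C(jk,k) / (C(5k-1,jk) C(8k,jk))`. -/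
theorem stmt_12 (k j : ℕ) (hk : 0 < k) (hj1 : 1 ≤ j) (hj3 : j ≤ 3)
    (hi : j * k ∈ Ioc k (3 * k)) :
    ((8 * k).choose (j * k) : ℝ)⁻¹ *
      ∏ ℓ ∈ (Ioc k (3 * k) ∪ Ico (5 * k) (7 * k)).erase (j * k),
        (ℓ : ℝ) / |(ℓ : ℝ) - ((j * k : ℕ) : ℝ)| ≤
    (((3 * k).choose (j * k) : ℝ) * ((7 * k - 1).choose (j * k) : ℝ) *
        ((j * k).choose k : ℝ)) /
      (((5 * k - 1).choose (j * k) : ℝ) * ((8 * k).choose (j * k) : ℝ)) := by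
  set i := j * k with hidef
  obtain ⟨hki, hi3⟩ := mem_Ioc.mp hi
  set a := i - (k + 1) with ha
  set b := 3 * k - i with hb
  set c := 5 * k - 1 - i with hc
  set d := 7 * k - 1 - i with hd
  -- split the index set
  have hsplit : (Ioc k (3 * k) ∪ Ico (5 * k) (7 * k)).erase i
      = (Ioo k i ∪ Ioc i (3 * k)) ∪ Ico (5 * k) (7 * k) := by
    ext x
    simp only [mem_erase, mem_union, mem_Ioc, mem_Ico, mem_Ioo]
    omega
  have hdj1 : Disjoint (Ioo k i ∪ Ioc i (3 * k)) (Ico (5 * k) (7 * k)) := by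
    rw [Finset.disjoint_left]
    intro x hx hx2
    simp only [mem_union, mem_Ioo, mem_Ioc, mem_Ico] at hx hx2
    omega
  have hdj2 : Disjoint (Ioo k i) (Ioc i (3 * k)) := by
    rw [Finset.disjoint_left]
    intro x hx hx2
    simp only [mem_Ioo, mem_Ioc] at hx hx2
    omega
  rw [hsplit, prod_union hdj1, prod_union hdj2]
  -- rewrite each of the three products as a quotient of casts of ℕ-products
  have e1 : ∏ ℓ ∈ Ioo k i, (ℓ : ℝ) / |(ℓ : ℝ) - (i : ℝ)|
      = ((∏ ℓ ∈ Ioo k i, ℓ : ℕ) : ℝ) / ((∏ ℓ ∈ Ioo k i, (i - ℓ) : ℕ) : ℝ) := by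
    rw [Nat.cast_prod, Nat.cast_prod, ← Finset.prod_div_distrib]
    refine prod_congr rfl fun ℓ hℓ => ?_
    simp only [mem_Ioo] at hℓ
    have h1 : ((i - ℓ : ℕ) : ℝ) = (i : ℝ) - ℓ := by
      have : ℓ ≤ i := hℓ.2.le
      push_cast [this]; ring
    rw [h1, abs_sub_comm, abs_of_nonneg (by
      have : (ℓ : ℝ) ≤ i := Nat.cast_le.mpr hℓ.2.le
      linarith)]
  have e2 : ∏ ℓ ∈ Ioc i (3 * k), (ℓ : ℝ) / |(ℓ : ℝ) - (i : ℝ)|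
      = ((∏ ℓ ∈ Ioc i (3 * k), ℓ : ℕ) : ℝ) / ((∏ ℓ ∈ Ioc i (3 * k), (ℓ - i) : ℕ) : ℝ) := by
    rw [Nat.cast_prod, Nat.cast_prod, ← Finset.prod_div_distrib]
    refine prod_congr rfl fun ℓ hℓ => ?_
    simp only [mem_Ioc] at hℓ
    have h1 : ((ℓ - i : ℕ) : ℝ) = (ℓ : ℝ) - i := by
      have : i ≤ ℓ := hℓ.1.le
      push_cast [this]; ring
    rw [h1, abs_of_nonneg (by
      have : (i : ℝ) ≤ ℓ := Nat.cast_le.mpr hℓ.1.le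
      linarith)]
  have e3 : ∏ ℓ ∈ Ico (5 * k) (7 * k), (ℓ : ℝ) / |(ℓ : ℝ) - (i : ℝ)|
      = ((∏ ℓ ∈ Ico (5 * k) (7 * k), ℓ : ℕ) : ℝ)
        / ((∏ ℓ ∈ Ico (5 * k) (7 * k), (ℓ - i) : ℕ) : ℝ) := by
    rw [Nat.cast_prod, Nat.cast_prod, ← Finset.prod_div_distrib]
    refine prod_congr rfl fun ℓ hℓ => ?_
    simp only [mem_Ico] at hℓ
    have hil : i ≤ ℓ := by omega
    have h1 : ((ℓ - i : ℕ) : ℝ) = (ℓ : ℝ) - i := by push_cast [hil]; ring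
    rw [h1, abs_of_nonneg (by
      have : (i : ℝ) ≤ ℓ := Nat.cast_le.mpr hil
      linarith)]
  rw [e1, e2, e3]
  set A1 := ∏ ℓ ∈ Ioo k i, ℓ with hA1def
  set B1 := ∏ ℓ ∈ Ioo k i, (i - ℓ) with hB1def
  set A2 := ∏ ℓ ∈ Ioc i (3 * k), ℓ with hA2def
  set B2 := ∏ ℓ ∈ Ioc i (3 * k), (ℓ - i) with hB2def
  set A3 := ∏ ℓ ∈ Ico (5 * k) (7 * k), ℓ with hA3def
  set B3 := ∏ ℓ ∈ Ico (5 * k) (7 * k), (ℓ - i) with hB3def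
  -- ℕ-level evaluations
  have hIoo : Ioo k i = Ioc k (i - 1) := by ext x; simp; omega
  have hIco : Ico (5 * k) (7 * k) = Ioc (5 * k - 1) (7 * k - 1) := by ext x; simp; omega
  have hA1 : k.factorial * A1 * i = i.factorial := by
    obtain ⟨i', hi'⟩ : ∃ i', i = i' + 1 := ⟨i - 1, by omega⟩
    rw [hA1def, hIoo, hi']
    simp only [Nat.add_sub_cancel]
    rw [fact_mul_prod_Ioc k i' (by omega), Nat.factorial_succ]
    ring
  have hB1 : B1 = a.factorial := by
    rw [hB1def, prod_Ioo_rev k i]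
    congr 1
  have hB1a : i - (k+1) = a := rfl
  have hA2 : i.factorial * A2 = (3 * k).factorial := fact_mul_prod_Ioc i (3 * k) hi3
  have hB2 : B2 = b.factorial := by
    rw [hB2def, prod_Ioc_sub i i (3 * k) le_rfl hi3]
    simpa using fact_mul_prod_Ioc 0 (3 * k - i) (Nat.zero_le _)
  have hA3 : (5 * k - 1).factorial * A3 = (7 * k - 1).factorial := by
    rw [hA3def, hIco]
    exact fact_mul_prod_Ioc (5 * k - 1) (7 * k - 1) (by omega)
  have hB3 : c.factorial * B3 = d.factorial := by
    rw [hB3def, hIco, prod_Ioc_sub i (5 * k - 1) (7 * k - 1) (by omega) (by omega)]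
    have := fact_mul_prod_Ioc (5 * k - 1 - i) (7 * k - 1 - i) (by omega)
    rw [hc, hd]
    exact this
  -- choose identities (ℕ)
  have hC3 : (3 * k).choose i * i.factorial * b.factorial = (3 * k).factorial := by
    rw [hb]; exact Nat.choose_mul_factorial_mul_factorial hi3
  have hC7 : (7 * k - 1).choose i * i.factorial * d.factorial = (7 * k - 1).factorial := by
    rw [hd]; exact Nat.choose_mul_factorial_mul_factorial (by omega)
  have hC5 : (5 * k - 1).choose i * i.factorial * c.factorial = (5 * k - 1).factorial := by
    rw [hc]; exact Nat.choose_mul_factorial_mul_factorial (by omega)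
  have hCik : i.choose k * k.factorial * (a + 1).factorial = i.factorial := by
    have h9 : i - k = a + 1 := by omega
    have := Nat.choose_mul_factorial_mul_factorial (show k ≤ i by omega)
    rwa [h9] at this
  -- real versions
  have fpos : ∀ n : ℕ, (0:ℝ) < (n.factorial : ℝ) := fun n => by
    exact_mod_cast Nat.factorial_pos n
  have hip : (0:ℝ) < (i : ℝ) := by
    have : 0 < i := by omega
    exact_mod_cast this
  have hC8p : (0:ℝ) < ((8 * k).choose i : ℝ) := by
    exact_mod_cast Nat.choose_pos (show i ≤ 8 * k by omega)
  have hC5p : (0:ℝ) < ((5 * k - 1).choose i : ℝ) := by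
    exact_mod_cast Nat.choose_pos (show i ≤ 5 * k - 1 by omega)
  have hA1' : (A1 : ℝ) = (i.factorial : ℝ) / ((k.factorial : ℝ) * i) := by
    rw [eq_div_iff (by positivity)]
    exact_mod_cast by rw [← hA1]; ring
  have hB1' : (B1 : ℝ) = (a.factorial : ℝ) := by exact_mod_cast hB1
  have hA2' : (A2 : ℝ) = ((3 * k).factorial : ℝ) / (i.factorial : ℝ) := by
    rw [eq_div_iff (by positivity)]
    exact_mod_cast by rw [← hA2]; ring
  have hB2' : (B2 : ℝ) = (b.factorial : ℝ) := by exact_mod_cast hB2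
  have hA3' : (A3 : ℝ) = ((7 * k - 1).factorial : ℝ) / ((5 * k - 1).factorial : ℝ) := by
    rw [eq_div_iff (by positivity)]
    exact_mod_cast by rw [← hA3]; ring
  have hB3' : (B3 : ℝ) = (d.factorial : ℝ) / (c.factorial : ℝ) := by
    rw [eq_div_iff (by positivity)]
    exact_mod_cast by rw [← hB3]; ring
  have hC3' : (((3 * k).choose i : ℕ) : ℝ)
      = ((3 * k).factorial : ℝ) / ((i.factorial : ℝ) * (b.factorial : ℝ)) := by
    rw [eq_div_iff (by positivity)]
    exact_mod_cast by rw [← hC3]; ring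
  have hC7' : (((7 * k - 1).choose i : ℕ) : ℝ)
      = ((7 * k - 1).factorial : ℝ) / ((i.factorial : ℝ) * (d.factorial : ℝ)) := by
    rw [eq_div_iff (by positivity)]
    exact_mod_cast by rw [← hC7]; ring
  have hC5' : (((5 * k - 1).choose i : ℕ) : ℝ)
      = ((5 * k - 1).factorial : ℝ) / ((i.factorial : ℝ) * (c.factorial : ℝ)) := by
    rw [eq_div_iff (by positivity)]
    exact_mod_cast by rw [← hC5]; ring
  have hCik' : ((i.choose k : ℕ) : ℝ)
      = (i.factorial : ℝ) / ((k.factorial : ℝ) * ((a+1).factorial : ℝ)) := by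
    rw [eq_div_iff (by positivity)]
    exact_mod_cast by rw [← hCik]; ring
  have hfa : (((a + 1).factorial : ℕ) : ℝ) = ((a : ℝ) + 1) * (a.factorial : ℝ) := by
    rw [Nat.factorial_succ]; push_cast; ring
  -- key equality
  have key : (((3 * k).choose i : ℝ) * ((7 * k - 1).choose i : ℝ) * ((i).choose k : ℝ))
        / (((5 * k - 1).choose i : ℝ) * ((8 * k).choose i : ℝ))
      = (((A1 : ℝ) / (B1 : ℝ) * ((A2 : ℝ) / (B2 : ℝ))) * ((A3 : ℝ) / (B3 : ℝ)))
          * ((i : ℝ) / ((a : ℝ) + 1)) * (((8 * k).choose i : ℝ))⁻¹ := by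
    rw [hA1', hB1', hA2', hB2', hA3', hB3', hC3', hC7', hC5', hCik', hfa]
    have n1 := (fpos k.factorial).ne'
    field_simp
  rw [key]
  have hPnn : (0:ℝ) ≤ ((A1 : ℝ) / (B1 : ℝ) * ((A2 : ℝ) / (B2 : ℝ))) * ((A3 : ℝ) / (B3 : ℝ)) := by
    positivity
  have h1le : (1:ℝ) ≤ (i : ℝ) / ((a : ℝ) + 1) := by
    rw [le_div_iff₀ (by positivity)]
    have : a + 1 ≤ i := by omega
    have := Nat.cast_le (α := ℝ).mpr this
    push_cast at this ⊢
    linarith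
  calc ((8 * k).choose i : ℝ)⁻¹ * (((A1 : ℝ) / (B1 : ℝ) * ((A2 : ℝ) / (B2 : ℝ))) * ((A3 : ℝ) / (B3 : ℝ)))
      = (((A1 : ℝ) / (B1 : ℝ) * ((A2 : ℝ) / (B2 : ℝ))) * ((A3 : ℝ) / (B3 : ℝ))) * 1
        * ((8 * k).choose i : ℝ)⁻¹ := by ring
    _ ≤ (((A1 : ℝ) / (B1 : ℝ) * ((A2 : ℝ) / (B2 : ℝ))) * ((A3 : ℝ) / (B3 : ℝ)))
        * ((i : ℝ) / ((a : ℝ) + 1)) * ((8 * k).choose i : ℝ)⁻¹ := by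
      have := mul_le_mul_of_nonneg_left h1le hPnn
      exact mul_le_mul_of_nonneg_right this (by positivity)
end

section
/- For positive integers k and j with 1 ≤ j ≤ 3, C(3k, jk)·C(jk, k) ≤ (5/(5−j))·C(5k−1, jk). -/
lemma key_nat (k j : ℕ) (hk : 0 < k) (hj1 : 1 ≤ j) (hj3 : j ≤ 3) :
    (5 - j) * ((3 * k).choose (j * k) * ((j * k).choose k)) ≤
      5 * ((5 * k - 1).choose (j * k)) := by
  have hjk3 : j * k ≤ 3 * k := Nat.mul_le_mul_right k hj3
  have hkjk : k ≤ j * k := by nlinarith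
  -- step 1: subset identity
  have h1 : (3 * k).choose (j * k) * ((j * k).choose k)
      = (3 * k).choose k * (2 * k).choose (j * k - k) := by
    have := Nat.choose_mul (n := 3 * k) hkjk
    simpa [show 3 * k - k = 2 * k by omega] using this
  -- step 2: Vandermonde
  have h2 : (3 * k).choose k * (2 * k).choose (j * k - k) ≤ (5 * k).choose (j * k) := by
    have := Nat.add_choose_eq (3 * k) (2 * k) (j * k)
    rw [show 3 * k + 2 * k = 5 * k by ring] at this
    rw [this]
    refine Finset.single_le_sum (f := fun ij : ℕ × ℕ => (3*k).choose ij.1 * (2*k).choose ij.2)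
      (fun i _ => Nat.zero_le _) (a := (k, j * k - k)) ?_
    simp [Finset.mem_antidiagonal]
    omega
  -- step 3: absorption
  have h3 : (5 * k - j * k) * ((5 * k).choose (j * k)) = 5 * k * ((5 * k - 1).choose (j * k)) := by
    have h5 : 5 * k = (5 * k - 1) + 1 := by omega
    have hle : j * k ≤ 5 * k - 1 := by omega
    have := Nat.add_one_mul_choose_eq (5 * k - 1) (5 * k - 1 - j * k)
    rw [Nat.choose_symm hle] at this
    rw [show 5*k-1+1 = 5*k by omega, show 5*k-1-j*k+1 = 5*k - j*k by omega] at this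
    rw [Nat.choose_symm (by omega : j*k ≤ 5*k)] at this
    rw [this]; ring
  have hcancel : (5 - j) * ((3 * k).choose (j * k) * ((j * k).choose k)) * k ≤
      5 * ((5 * k - 1).choose (j * k)) * k := by
    calc (5 - j) * ((3 * k).choose (j * k) * ((j * k).choose k)) * k
        = ((5 - j) * k) * ((3 * k).choose k * (2 * k).choose (j * k - k)) := by rw [h1]; ring
      _ ≤ ((5 - j) * k) * ((5 * k).choose (j * k)) := Nat.mul_le_mul_left _ h2
      _ = (5 * k - j * k) * ((5 * k).choose (j * k)) := by
          rw [Nat.sub_mul]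
      _ = 5 * k * ((5 * k - 1).choose (j * k)) := h3
      _ = 5 * ((5 * k - 1).choose (j * k)) * k := by ring
  exact Nat.le_of_mul_le_mul_right hcancel hk

/-- For `1 ≤ j ≤ 3`, `C(3k,jk) · C(jk,k) ≤ (5/(5-j)) · C(5k-1,jk)`. -/
theorem stmt_13 (k j : ℕ) (hk : 0 < k) (hj1 : 1 ≤ j) (hj3 : j ≤ 3) :
    ((3 * k).choose (j * k) : ℝ) * ((j * k).choose k : ℝ) ≤
      (5 / (5 - (j : ℝ))) * ((5 * k - 1).choose (j * k) : ℝ) := by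
  have hjR : (j : ℝ) ≤ 3 := by exact_mod_cast hj3
  have hpos : (0 : ℝ) < 5 - (j : ℝ) := by linarith
  rw [div_mul_eq_mul_div, le_div_iff₀ hpos]
  have := key_nat k j hk hj1 hj3
  have hcast : ((5 - j : ℕ) : ℝ) = 5 - (j : ℝ) := by
    have : j ≤ 5 := by omega
    push_cast [this]; ring
  have h2 : (((5 - j) * ((3 * k).choose (j * k) * ((j * k).choose k)) : ℕ) : ℝ) ≤
      ((5 * ((5 * k - 1).choose (j * k)) : ℕ) : ℝ) := by exact_mod_cast this
  push_cast at h2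
  rw [hcast] at h2
  nlinarith [h2]
end

section
/- For positive integers k and 1 ≤ j ≤ 3, (5/(5−j))·C(7k−1, jk)·C(8k, jk)⁻¹ ≤ (5/2)·(7/8)^k. -/
private lemma aux_step (k j m : ℕ) (hk : 0 < k) (hj : 1 ≤ j) (hm : m ≤ k) :
    8 ^ m * (7 * k).choose (j * k) ≤ 7 ^ m * (7 * k + m).choose (j * k) := by
  induction m with
  | zero => simp
  | succ m ih =>
    have hm' : m ≤ k := le_of_lt hm
    have ih' := ih hm'
    set n := 7 * k + m with hn
    have hjk : k ≤ j * k := Nat.le_mul_of_pos_left k hj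
    have h1 : n.choose (j * k) * (n + 1) = (n + 1).choose (j * k) * (n + 1 - j * k) :=
      Nat.choose_mul_succ_eq n (j * k)
    have h2 : 8 * (n + 1 - j * k) ≤ 7 * (n + 1) := by omega
    have key : 8 * n.choose (j * k) ≤ 7 * (n + 1).choose (j * k) := by
      have h3 : (8 * n.choose (j * k)) * (n + 1) ≤ (7 * (n + 1).choose (j * k)) * (n + 1) := by
        calc (8 * n.choose (j * k)) * (n + 1) = 8 * (n.choose (j * k) * (n + 1)) := by ring
        _ = 8 * ((n + 1).choose (j * k) * (n + 1 - j * k)) := by rw [h1]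
        _ = (n + 1).choose (j * k) * (8 * (n + 1 - j * k)) := by ring
        _ ≤ (n + 1).choose (j * k) * (7 * (n + 1)) := Nat.mul_le_mul_left _ h2
        _ = (7 * (n + 1).choose (j * k)) * (n + 1) := by ring
      exact Nat.le_of_mul_le_mul_right h3 (Nat.succ_pos n)
    calc 8 ^ (m + 1) * (7 * k).choose (j * k)
        = 8 * (8 ^ m * (7 * k).choose (j * k)) := by ring
      _ ≤ 8 * (7 ^ m * n.choose (j * k)) := Nat.mul_le_mul_left _ ih'
      _ = 7 ^ m * (8 * n.choose (j * k)) := by ring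
      _ ≤ 7 ^ m * (7 * (n + 1).choose (j * k)) := Nat.mul_le_mul_left _ key
      _ = 7 ^ (m + 1) * (7 * k + (m + 1)).choose (j * k) := by
          rw [show 7 * k + (m + 1) = n + 1 by omega]; ring

/-- For `1 ≤ j ≤ 3`, `(5/(5-j)) · C(7k-1,jk) · C(8k,jk)⁻¹ ≤ (5/2) · (7/8)^k`. -/
theorem stmt_15 (k j : ℕ) (hk : 0 < k) (hj1 : 1 ≤ j) (hj3 : j ≤ 3) :
    (5 / (5 - (j : ℝ))) * ((7 * k - 1).choose (j * k) : ℝ) *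
      (((8 * k).choose (j * k) : ℝ))⁻¹ ≤ (5 / 2) * (7 / 8 : ℝ) ^ k := by
  have hjk8 : j * k ≤ 8 * k := Nat.mul_le_mul_right k (by omega)
  have hb : 0 < (((8 * k).choose (j * k) : ℝ)) := by
    exact_mod_cast Nat.choose_pos hjk8
  have hac : ((7 * k - 1).choose (j * k) : ℝ) ≤ (((7 * k).choose (j * k) : ℝ)) := by
    exact_mod_cast Nat.choose_le_choose (j * k) (Nat.sub_le _ _)
  have hkey : (8 : ℝ) ^ k * ((7 * k).choose (j * k)) ≤ (7 : ℝ) ^ k * ((8 * k).choose (j * k)) := by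
    have h := aux_step k j k hk hj1 le_rfl
    rw [show 7 * k + k = 8 * k by ring] at h
    exact_mod_cast h
  have hj3' : (j : ℝ) ≤ 3 := by exact_mod_cast hj3
  have hj1' : (1 : ℝ) ≤ (j : ℝ) := by exact_mod_cast hj1
  have h52 : 5 / (5 - (j : ℝ)) ≤ 5 / 2 := by
    apply div_le_div_of_nonneg_left (by norm_num) (by norm_num) (by linarith)
  have ha0 : (0 : ℝ) ≤ ((7 * k - 1).choose (j * k) : ℝ) := Nat.cast_nonneg _
  have hc0 : (0 : ℝ) ≤ (((7 * k).choose (j * k) : ℝ)) := Nat.cast_nonneg _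
  have hcb : (((7 * k).choose (j * k) : ℝ)) * (((8 * k).choose (j * k) : ℝ))⁻¹
      ≤ (7 / 8 : ℝ) ^ k := by
    rw [div_pow, mul_inv_le_iff₀ hb, div_mul_eq_mul_div, le_div_iff₀ (by positivity : (0:ℝ) < 8 ^ k)]
    nlinarith [hkey]
  calc (5 / (5 - (j : ℝ))) * ((7 * k - 1).choose (j * k) : ℝ) * (((8 * k).choose (j * k) : ℝ))⁻¹
      ≤ (5 / 2) * (((7 * k).choose (j * k) : ℝ)) * (((8 * k).choose (j * k) : ℝ))⁻¹ := by
        apply mul_le_mul _ le_rfl (inv_nonneg.mpr hb.le) (by positivity)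
        exact mul_le_mul h52 hac ha0 (by norm_num)
    _ = (5 / 2) * ((((7 * k).choose (j * k) : ℝ)) * (((8 * k).choose (j * k) : ℝ))⁻¹) := by ring
    _ ≤ (5 / 2) * (7 / 8 : ℝ) ^ k := by nlinarith [hcb]
end

section
/- There exist absolute constants c, ε ∈ (0, ∞) such that for every positive integer n divisible by 8, the orthogonal rank of the graph H_2^n(n/2) on {0,1}^n (two strings adjacent iff their Hamming distance is at least n/2) is at least 2^{εn − c}. -/
open Finset

namespace Stmt19

variable {n : ℕ}

noncomputable def sgn (a : ZMod 2) : ℂ := if a = 0 then 1 else -1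

lemma zmod2_cases : ∀ a : ZMod 2, a = 0 ∨ a = 1 := by decide

@[simp] lemma sgn_zero : sgn 0 = 1 := rfl

lemma sgn_add (a b : ZMod 2) : sgn (a + b) = sgn a * sgn b := by
  have h11 : (1 + 1 : ZMod 2) = 0 := by decide
  rcases zmod2_cases a with ha | ha <;> rcases zmod2_cases b with hb | hb <;>
    subst ha <;> subst hb <;> simp [sgn, h11]

lemma sgn_sq (a : ZMod 2) : sgn a * sgn a = 1 := by
  rcases zmod2_cases a with ha | ha <;> subst ha <;> simp [sgn]

/-- character attached to `S`. -/
noncomputable def χ (S : Finset (Fin n)) (x : Fin n → ZMod 2) : ℂ := ∏ i ∈ S, sgn (x i)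

lemma chi_add (S : Finset (Fin n)) (x y : Fin n → ZMod 2) :
    χ S (x + y) = χ S x * χ S y := by
  simp only [χ, Pi.add_apply, sgn_add, prod_mul_distrib]

@[simp] lemma chi_zero (S : Finset (Fin n)) : χ S 0 = 1 := by simp [χ]

/-- sum of coordinate signs. -/
noncomputable def σc (x : Fin n → ZMod 2) : ℂ := ∑ i, sgn (x i)

noncomputable def flip (i : Fin n) (S : Finset (Fin n)) : Finset (Fin n) :=
  if i ∈ S then S.erase i else insert i S

lemma flip_flip (i : Fin n) (S : Finset (Fin n)) : flip i (flip i S) = S := by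
  by_cases h : i ∈ S
  · simp [flip, h, Finset.insert_erase]
  · simp [flip, h, Finset.erase_insert]

lemma card_flip_le (i : Fin n) (S : Finset (Fin n)) : (flip i S).card ≤ S.card + 1 := by
  by_cases h : i ∈ S
  · simp only [flip, if_pos h]
    exact le_trans (Finset.card_erase_le) (Nat.le_succ _)
  · simp only [flip, if_neg h]
    exact Finset.card_insert_le _ _

lemma chi_flip (i : Fin n) (S : Finset (Fin n)) (x : Fin n → ZMod 2) :
    χ (flip i S) x = sgn (x i) * χ S x := by
  by_cases h : i ∈ S
  · have : χ S x = sgn (x i) * χ (S.erase i) x := (Finset.mul_prod_erase S _ h).symm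
    rw [flip, if_pos h, this, ← mul_assoc, sgn_sq, one_mul]
  · rw [flip, if_neg h, χ, Finset.prod_insert h]; rfl

/-- `g` is a combination of characters of level `≤ d`. -/
def Rep (d : ℕ) (g : (Fin n → ZMod 2) → ℂ) : Prop :=
  ∃ γ : Finset (Fin n) → ℂ, (∀ S, γ S ≠ 0 → S.card ≤ d) ∧
    ∀ z, g z = ∑ S : Finset (Fin n), γ S * χ S z

lemma rep_one : Rep (n := n) 0 (fun _ => 1) := by
  refine ⟨fun S => if S = ∅ then 1 else 0, ?_, ?_⟩
  · intro S hS
    by_cases h : S = ∅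
    · simp [h]
    · simp [h] at hS
  · intro z
    simp [ite_mul, Finset.sum_ite_eq', χ]

lemma rep_mul_linear {d : ℕ} {g : (Fin n → ZMod 2) → ℂ} (c : ℂ) (h : Rep d g) :
    Rep (d + 1) (fun z => (σc z - c) * g z) := by
  obtain ⟨γ, hsupp, hexp⟩ := h
  refine ⟨fun S => (∑ i, γ (flip i S)) - c * γ S, ?_, ?_⟩
  · intro S hS
    by_cases h1 : ∃ i, γ (flip i S) ≠ 0
    · obtain ⟨i, hi⟩ := h1
      have h2 := hsupp _ hi
      have h3 : S.card ≤ (flip i S).card + 1 := by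
        conv_lhs => rw [← flip_flip i S]
        exact card_flip_le _ _
      omega
    · push_neg at h1
      have : γ S ≠ 0 := by
        intro h0
        apply hS
        simp [h0, Finset.sum_eq_zero fun i _ => h1 i]
      exact le_trans (hsupp _ this) (Nat.le_succ _)
  · intro z
    have key : ∀ i : Fin n, ∑ S : Finset (Fin n), γ (flip i S) * χ S z
        = ∑ S : Finset (Fin n), γ S * (sgn (z i) * χ S z) := by
      intro i
      have hb : Function.Bijective (flip (n := n) i) :=
        Function.Involutive.bijective (flip_flip i)
      calc ∑ S : Finset (Fin n), γ (flip i S) * χ S z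
          = ∑ S : Finset (Fin n), γ (flip i (flip i S)) * χ (flip i S) z :=
            (Function.Bijective.sum_comp hb _).symm
        _ = ∑ S : Finset (Fin n), γ S * (sgn (z i) * χ S z) := by
            simp_rw [flip_flip, chi_flip]
    have h1 : σc z * g z = ∑ i, ∑ S : Finset (Fin n), γ S * (sgn (z i) * χ S z) := by
      rw [hexp, σc, Finset.sum_mul]
      refine Finset.sum_congr rfl fun i _ => ?_
      rw [Finset.mul_sum]
      exact Finset.sum_congr rfl fun S _ => by ring
    show (σc z - c) * g z = _
    calc (σc z - c) * g z = σc z * g z - c * g z := sub_mul _ _ _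
      _ = (∑ i, ∑ S : Finset (Fin n), γ (flip i S) * χ S z) - c * g z := by
          rw [h1]; congr 1; exact Finset.sum_congr rfl fun i _ => (key i).symm
      _ = (∑ S : Finset (Fin n), (∑ i, γ (flip i S)) * χ S z)
          - ∑ S : Finset (Fin n), (c * γ S) * χ S z := by
          rw [Finset.sum_comm, hexp, Finset.mul_sum]
          congr 1
          · exact Finset.sum_congr rfl fun S _ => (Finset.sum_mul _ _ _).symm
          · exact Finset.sum_congr rfl fun S _ => by ring
      _ = ∑ S : Finset (Fin n), ((∑ i, γ (flip i S)) - c * γ S) * χ S z := by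
          rw [← Finset.sum_sub_distrib]
          exact Finset.sum_congr rfl fun S _ => (sub_mul _ _ _).symm

lemma rep_prod (l : ℕ) (c : ℕ → ℂ) :
    Rep (n := n) l (fun z => ∏ k ∈ range l, (σc z - c k)) := by
  induction l with
  | zero => simpa using rep_one
  | succ l ih =>
      have := rep_mul_linear (c l) ih
      refine this.imp fun γ ⟨h1, h2⟩ => ⟨h1, fun z => ?_⟩
      rw [← h2 z]
      simp [Finset.prod_range_succ]
      ring

-- continuation to be appended to a.lean before `end Stmt19`
lemma chi_sq (S : Finset (Fin n)) (z : Fin n → ZMod 2) : χ S z * χ S z = 1 := by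
  rw [χ, ← Finset.prod_mul_distrib]
  simp [sgn_sq]

lemma chi_compl (S : Finset (Fin n)) (z : Fin n → ZMod 2) :
    χ Sᶜ z = χ univ z * χ S z := by
  have h1 : χ (univ : Finset (Fin n)) z = χ Sᶜ z * χ S z := by
    have hu : Sᶜ ∪ S = (univ : Finset (Fin n)) := by
      ext i; simp [em]; tauto
    rw [χ, χ, χ, ← Finset.prod_union (disjoint_compl_left), hu]
  rw [h1, mul_assoc, chi_sq, mul_one]

lemma chi_univ_eq (z : Fin n → ZMod 2) :
    χ univ z = (-1 : ℂ) ^ hammingNorm z := by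
  rw [χ, ← Finset.prod_filter_mul_prod_filter_not univ (fun i => z i = 0)]
  have h1 : ∀ i ∈ univ.filter (fun i => z i = 0), sgn (z i) = 1 := by
    intro i hi; simp only [mem_filter] at hi; simp [hi.2]
  have h2 : ∀ i ∈ univ.filter (fun i => ¬ z i = 0), sgn (z i) = -1 := by
    intro i hi; simp only [mem_filter] at hi; simp [sgn, hi.2]
  rw [Finset.prod_congr rfl h1, Finset.prod_congr rfl h2]
  simp only [Finset.prod_const, Finset.prod_const_one, one_pow, one_mul]
  rfl

lemma sigma_eq (z : Fin n → ZMod 2) :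
    σc z = (n : ℂ) - 2 * (hammingNorm z : ℂ) := by
  rw [σc, ← Finset.sum_filter_add_sum_filter_not univ (fun i => z i = 0)]
  have h1 : ∀ i ∈ univ.filter (fun i => z i = 0), sgn (z i) = 1 := by
    intro i hi; simp only [mem_filter] at hi; simp [hi.2]
  have h2 : ∀ i ∈ univ.filter (fun i => ¬ z i = 0), sgn (z i) = -1 := by
    intro i hi; simp only [mem_filter] at hi; simp [sgn, hi.2]
  rw [Finset.sum_congr rfl h1, Finset.sum_congr rfl h2, Finset.sum_const,
    Finset.sum_const]
  have hcard : (univ.filter (fun i => z i = 0)).card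
      + (univ.filter (fun i => ¬ z i = 0)).card = n := by
    rw [Finset.card_filter_add_card_filter_not]
    simp
  have hw : (univ.filter (fun i => ¬ z i = 0)).card = hammingNorm z := rfl
  have hc : ((univ.filter (fun i => z i = 0)).card : ℂ) = (n : ℂ) - hammingNorm z := by
    rw [← hw] at *
    have := hcard
    push_cast [← this]
    ring
  simp only [nsmul_eq_mul, smul_neg, mul_one, hc, hw]
  ring

noncomputable def κc (l : ℕ) : ℂ := ∏ k ∈ range l, (4 * ((k : ℂ) + 1))

lemma κc_ne_zero (l : ℕ) : κc l ≠ 0 := by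
  rw [κc]
  apply Finset.prod_ne_zero_iff.2
  intro k _
  have : (0:ℝ) < 4 * ((k:ℝ) + 1) := by positivity
  intro h
  apply this.ne'
  have := congrArg Complex.re h
  simpa using this

noncomputable def gP (n l : ℕ) (z : Fin n → ZMod 2) : ℂ :=
  ∏ k ∈ range l, (σc z - ((n : ℂ) - 4 * ((k : ℂ) + 1)))

noncomputable def fF (n l : ℕ) (z : Fin n → ZMod 2) : ℂ :=
  (κc l)⁻¹ / 2 * ((1 + χ univ z) * gP n l z)

lemma fF_zero (l : ℕ) : fF n l 0 = 1 := by
  have hσ : σc (0 : Fin n → ZMod 2) = (n : ℂ) := by simp [σc]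
  have hg : gP n l 0 = κc l := by
    rw [gP, κc]
    refine Finset.prod_congr rfl fun k _ => ?_
    rw [hσ]; ring
  rw [fF, hg, chi_zero]
  field_simp [κc_ne_zero l]
  ring
lemma fF_vanish (l : ℕ) (z : Fin n → ZMod 2) (h1 : 1 ≤ hammingNorm z)
    (h2 : hammingNorm z ≤ 2 * l + 1) : fF n l z = 0 := by
  rcases Nat.even_or_odd (hammingNorm z) with he | ho
  · -- even: some factor of the product vanishes
    obtain ⟨k₀, hk₀⟩ := he
    have hk1 : 1 ≤ k₀ := by omega
    have hkl : k₀ - 1 ∈ range l := by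
      simp only [mem_range]; omega
    have hfac : σc z - ((n : ℂ) - 4 * (((k₀ - 1 : ℕ) : ℂ) + 1)) = 0 := by
      rw [sigma_eq, hk₀]
      have : ((k₀ - 1 : ℕ) : ℂ) = (k₀ : ℂ) - 1 := by
        push_cast [Nat.cast_sub hk1]; ring
      rw [this]
      push_cast
      ring
    have hg : gP n l z = 0 := Finset.prod_eq_zero hkl hfac
    rw [fF, hg]
    ring
  · -- odd: 1 + χ univ z = 0
    have : χ univ z = -1 := by
      rw [chi_univ_eq, ho.neg_one_pow]
    rw [fF, this]
    ring

lemma fF_rep (l : ℕ) :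
    ∃ γ : Finset (Fin n) → ℂ, (∀ S, γ S ≠ 0 → S.card ≤ l ∨ n - l ≤ S.card) ∧
      ∀ z, fF n l z = ∑ S : Finset (Fin n), γ S * χ S z := by
  obtain ⟨γg, hsupp, hexp⟩ := rep_prod (n := n) l (fun k => (n : ℂ) - 4 * ((k : ℂ) + 1))
  refine ⟨fun S => (κc l)⁻¹ / 2 * (γg S + γg Sᶜ), ?_, ?_⟩
  · intro S hS
    have : γg S ≠ 0 ∨ γg Sᶜ ≠ 0 := by
      by_contra hc
      push_neg at hc
      apply hS
      show (κc l)⁻¹ / 2 * (γg S + γg Sᶜ) = 0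
      rw [hc.1, hc.2]
      ring
    rcases this with h | h
    · exact Or.inl (hsupp _ h)
    · right
      have h1 := hsupp _ h
      have h2 : Sᶜ.card = n - S.card := by
        rw [Finset.card_compl]
        simp
      have h3 : S.card ≤ n := by
        have := Finset.card_le_univ S
        simpa using this
      omega
  · intro z
    have hgz : gP n l z = ∑ S : Finset (Fin n), γg S * χ S z := hexp z
    have hcompl : ∑ S : Finset (Fin n), γg Sᶜ * χ S z = χ univ z * gP n l z := by
      have hb : Function.Bijective (fun S : Finset (Fin n) => Sᶜ) :=
        Function.Involutive.bijective compl_compl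
      calc ∑ S : Finset (Fin n), γg Sᶜ * χ S z
          = ∑ S : Finset (Fin n), γg Sᶜᶜ * χ Sᶜ z :=
            (Function.Bijective.sum_comp hb (fun S : Finset (Fin n) => γg Sᶜ * χ S z)).symm
        _ = ∑ S : Finset (Fin n), γg S * (χ univ z * χ S z) := by
            simp_rw [compl_compl, chi_compl]
        _ = χ univ z * gP n l z := by
            rw [hgz, Finset.mul_sum]
            exact Finset.sum_congr rfl fun S _ => by ring
    calc fF n l z = (κc l)⁻¹ / 2 * (gP n l z + χ univ z * gP n l z) := by rw [fF]; ring
      _ = (κc l)⁻¹ / 2 * (gP n l z + ∑ S : Finset (Fin n), γg Sᶜ * χ S z) := by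
          rw [hcompl]
      _ = (κc l)⁻¹ / 2 * ((∑ S : Finset (Fin n), γg S * χ S z)
            + ∑ S : Finset (Fin n), γg Sᶜ * χ S z) := by rw [hgz]
      _ = ∑ S : Finset (Fin n), (κc l)⁻¹ / 2 * (γg S + γg Sᶜ) * χ S z := by
          rw [← Finset.sum_add_distrib, Finset.mul_sum]
          exact Finset.sum_congr rfl fun S _ => by ring

lemma card_low (l : ℕ) :
    (univ.filter (fun S : Finset (Fin n) => S.card ≤ l)).card
      = ∑ t ∈ range (l + 1), n.choose t := by
  have hset : univ.filter (fun S : Finset (Fin n) => S.card ≤ l)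
      = (range (l + 1)).biUnion (fun t => Finset.powersetCard t univ) := by
    ext S
    simp only [mem_filter, mem_univ, true_and, mem_biUnion, mem_range,
      Finset.mem_powersetCard, Nat.lt_succ_iff]
    constructor
    · intro h
      exact ⟨S.card, h, Finset.subset_univ S, rfl⟩
    · rintro ⟨t, ht, -, rfl⟩
      exact ht
  rw [hset, Finset.card_biUnion]
  · refine Finset.sum_congr rfl fun t _ => ?_
    rw [Finset.card_powersetCard]
    simp
  · intro t _ t' _ htt'
    simp only [Function.onFun]
    rw [Finset.disjoint_left]
    intro S hS hS'
    rw [Finset.mem_powersetCard] at hS hS'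
    exact htt' (hS.2 ▸ hS'.2.symm ▸ rfl)

lemma card_high_le (l : ℕ) :
    (univ.filter (fun S : Finset (Fin n) => n - l ≤ S.card)).card
      ≤ (univ.filter (fun S : Finset (Fin n) => S.card ≤ l)).card := by
  apply Finset.card_le_card_of_injOn (fun S => Sᶜ)
  · intro S hS
    simp only [Finset.mem_coe, mem_filter, mem_univ, true_and] at hS ⊢
    have h2 : Sᶜ.card = n - S.card := by
      rw [Finset.card_compl]; simp
    omega
  · intro S _ S' _ h
    simpa using congrArg compl h

lemma numeric (r : ℕ) (hr : 1 ≤ r) :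
    2 ^ r * 3 ^ (2 * r - 1) * 4 ^ (8 * r) ≤ 2 ^ (8 * r) * 3 ^ (8 * r) := by
  have h4 : (4 : ℕ) ^ (8 * r) = 2 ^ (16 * r) := by
    rw [show (4 : ℕ) = 2 ^ 2 by norm_num, ← pow_mul, show 2 * (8 * r) = 16 * r by ring]
  have h1 : (2 : ℕ) ^ (9 * r) ≤ 3 ^ (6 * r) := by
    calc (2:ℕ) ^ (9 * r) = (2 ^ 9) ^ r := by rw [← pow_mul]
      _ ≤ (3 ^ 6) ^ r := Nat.pow_le_pow_left (by norm_num) r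
      _ = 3 ^ (6 * r) := by rw [← pow_mul]
  calc 2 ^ r * 3 ^ (2 * r - 1) * 4 ^ (8 * r)
      = (2 ^ (8 * r) * 3 ^ (2 * r - 1)) * 2 ^ (9 * r) := by
        rw [h4]
        have : (2:ℕ) ^ r * 2 ^ (16 * r) = 2 ^ (8 * r) * 2 ^ (9 * r) := by
          rw [← pow_add, ← pow_add, show r + 16 * r = 8 * r + 9 * r by ring]
        calc 2 ^ r * 3 ^ (2 * r - 1) * 2 ^ (16 * r)
            = (2 ^ r * 2 ^ (16 * r)) * 3 ^ (2 * r - 1) := by ring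
          _ = (2 ^ (8 * r) * 2 ^ (9 * r)) * 3 ^ (2 * r - 1) := by rw [this]
          _ = 2 ^ (8 * r) * 3 ^ (2 * r - 1) * 2 ^ (9 * r) := by ring
      _ ≤ (2 ^ (8 * r) * 3 ^ (2 * r - 1)) * (3 ^ (6 * r)) := Nat.mul_le_mul_left _ h1
      _ ≤ (2 ^ (8 * r) * 3 ^ (2 * r - 1)) * (3 ^ (6 * r + 1)) := by
        apply Nat.mul_le_mul_left
        exact Nat.pow_le_pow_right (by norm_num) (by omega)
      _ = 2 ^ (8 * r) * 3 ^ (8 * r) := by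
        rw [mul_assoc, ← pow_add, show 2 * r - 1 + (6 * r + 1) = 8 * r by omega]

end Stmt19
/-- There are constants `c, ε > 0` such that for every `n` divisible by `8`,
the orthogonal rank of `H_2^n(n/2)` (the graph on `{0,1}^n` where two strings
are adjacent iff their Hamming distance is at least `n/2`) is at least
`2^{εn - c}`: any assignment of unit vectors in `ℂ^D` which is orthogonal on
adjacent vertices forces `D ≥ 2^{εn - c}`. -/
theorem stmt_19 : ∃ c ε : ℝ, 0 < c ∧ 0 < ε ∧
    ∀ n : ℕ, 0 < n → 8 ∣ n →
    ∀ D : ℕ, ∀ φ : (Fin n → ZMod 2) → EuclideanSpace ℂ (Fin D),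
      (∀ x, (inner ℂ (φ x) (φ x) : ℂ) = 1) →
      (∀ x y, n / 2 ≤ hammingDist x y → (inner ℂ (φ x) (φ y) : ℂ) = 0) →
      (2 : ℝ) ^ (ε * n - c) ≤ (D : ℝ) := by
  classical
  refine ⟨1, 1/8, one_pos, by norm_num, ?_⟩
  intro n hn h8
  obtain ⟨r, rfl⟩ := h8
  intro D φ hunit horth
  have hr : 1 ≤ r := by omega
  set l : ℕ := 2 * r - 1 with hl
  -- the coefficient representation of the witness function
  obtain ⟨γ, hγsupp, hγexp⟩ := Stmt19.fF_rep (n := 8 * r) l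
  set F : Finset (Finset (Fin (8 * r))) :=
    univ.filter (fun S : Finset (Fin (8 * r)) => S.card ≤ l ∨ 8 * r - l ≤ S.card) with hF
  -- the two matrices
  set A : Matrix (Fin (8 * r) → ZMod 2) (↥F × Fin D) ℂ :=
    fun x p => γ p.1.1 * Stmt19.χ p.1.1 x * φ x p.2 with hA
  set B : Matrix (↥F × Fin D) (Fin (8 * r) → ZMod 2) ℂ :=
    fun p y => Stmt19.χ p.1.1 y * (starRingEnd ℂ) (φ y p.2) with hB
  have key : A * B = 1 := by
    ext x y
    rw [Matrix.mul_apply]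
    have hsum : ∑ p : ↥F × Fin D, A x p * B p y
        = (∑ S ∈ F, γ S * (Stmt19.χ S x * Stmt19.χ S y))
          * (∑ i, φ x i * (starRingEnd ℂ) (φ y i)) := by
      rw [Fintype.sum_prod_type, ← Finset.sum_coe_sort F
        (fun S => γ S * (Stmt19.χ S x * Stmt19.χ S y))]
      rw [Finset.sum_mul]
      refine Finset.sum_congr rfl fun S _ => ?_
      rw [Finset.mul_sum]
      refine Finset.sum_congr rfl fun i _ => ?_
      simp only [hA, hB]
      ring
    have hfull : ∑ S ∈ F, γ S * (Stmt19.χ S x * Stmt19.χ S y)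
        = Stmt19.fF (8 * r) l (x + y) := by
      rw [Finset.sum_subset (Finset.subset_univ F)]
      · rw [hγexp (x + y)]
        refine Finset.sum_congr rfl fun S _ => ?_
        rw [Stmt19.chi_add]
      · intro S _ hS
        have : γ S = 0 := by
          by_contra hne
          exact hS (Finset.mem_filter.2 ⟨Finset.mem_univ S, hγsupp S hne⟩)
        rw [this, zero_mul]
    have hinner : ∑ i, φ x i * (starRingEnd ℂ) (φ y i) = (inner ℂ (φ y) (φ x) : ℂ) := by
      rw [PiLp.inner_apply]
      exact Finset.sum_congr rfl fun i _ => (RCLike.inner_apply _ _).symm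
    rw [hsum, hfull, hinner]
    by_cases hxy : x = y
    · subst hxy
      have hz : x + x = 0 := by
        funext i
        have h : ∀ a : ZMod 2, a + a = 0 := by decide
        exact h (x i)
      rw [hz, Stmt19.fF_zero, hunit x, Matrix.one_apply_eq, one_mul]
    · rw [Matrix.one_apply_ne hxy]
      by_cases hd : 8 * r / 2 ≤ hammingDist x y
      · rw [horth y x (by rwa [hammingDist_comm]), mul_zero]
      · push_neg at hd
        have hpos : 1 ≤ hammingDist x y :=
          Nat.pos_of_ne_zero (fun h0 => hxy (hammingDist_eq_zero.mp h0))
        have hnorm : hammingNorm (x + y) = hammingDist x y := by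
          have hsub : -x + y = x + y := by
            funext i
            have h : ∀ a b : ZMod 2, -a + b = a + b := by decide
            exact h (x i) (y i)
          rw [hammingDist_eq_hammingNorm, hsub]
        have hvan : Stmt19.fF (8 * r) l (x + y) = 0 := by
          apply Stmt19.fF_vanish
          · omega
          · have : 8 * r / 2 = 4 * r := by omega
            omega
        rw [hvan, zero_mul]
  -- rank bound
  have hcard : Fintype.card (Fin (8 * r) → ZMod 2) = 2 ^ (8 * r) := by
    simp [Fintype.card_fun]
  have hrank : 2 ^ (8 * r) ≤ F.card * D := by
    have h1 : (1 : Matrix (Fin (8 * r) → ZMod 2) (Fin (8 * r) → ZMod 2) ℂ).rank = 2 ^ (8 * r) := by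
      rw [Matrix.rank_one, hcard]
    have h2 : (A * B).rank ≤ F.card * D := by
      refine le_trans (Matrix.rank_mul_le_left A B) ?_
      refine le_trans (Matrix.rank_le_card_width A) ?_
      rw [Fintype.card_prod, Fintype.card_coe, Fintype.card_fin]
    rw [key, h1] at h2
    exact h2
  -- counting bound on F.card
  have hFcard : F.card ≤ 2 * ∑ t ∈ range (l + 1), (8 * r).choose t := by
    have hsplit : F ⊆ univ.filter (fun S : Finset (Fin (8 * r)) => S.card ≤ l)
        ∪ univ.filter (fun S : Finset (Fin (8 * r)) => 8 * r - l ≤ S.card) := by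
      rw [hF, ← Finset.filter_or]
    refine le_trans (Finset.card_le_card hsplit) ?_
    refine le_trans (Finset.card_union_le _ _) ?_
    rw [Stmt19.card_low (n := 8 * r) l]
    have := Stmt19.card_high_le (n := 8 * r) l
    rw [Stmt19.card_low (n := 8 * r) l] at this
    omega
  -- real-number bound on the binomial sum
  have hbinom : (∑ t ∈ range (l + 1), (8 * r).choose t : ℝ) ≤ 3 ^ l * (4 / 3) ^ (8 * r) := by
    have hln : l + 1 ≤ 8 * r + 1 := by omega
    calc (∑ t ∈ range (l + 1), (8 * r).choose t : ℝ)
        = ∑ t ∈ range (l + 1), ((8 * r).choose t : ℝ) := by push_cast; ring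
      _ ≤ ∑ t ∈ range (l + 1), ((8 * r).choose t : ℝ) * (3 ^ l * (1 / 3) ^ t) := by
          refine Finset.sum_le_sum fun t ht => ?_
          rw [mem_range] at ht
          have htl : t ≤ l := by omega
          have hone : (1 : ℝ) ≤ 3 ^ l * (1 / 3) ^ t := by
            have : (3:ℝ) ^ l * (1 / 3) ^ t = 3 ^ (l - t) := by
              rw [show l = (l - t) + t by omega, pow_add]
              field_simp
              rw [Nat.add_sub_cancel, mul_assoc, ← mul_pow]; norm_num
            rw [this]
            exact one_le_pow₀ (by norm_num)
          nlinarith [Nat.cast_nonneg (α := ℝ) ((8 * r).choose t)]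
      _ ≤ ∑ t ∈ range (8 * r + 1), ((8 * r).choose t : ℝ) * (3 ^ l * (1 / 3) ^ t) := by
          refine Finset.sum_le_sum_of_subset_of_nonneg
            (Finset.range_subset_range.2 hln) fun t _ _ => ?_
          positivity
      _ = 3 ^ l * ∑ t ∈ range (8 * r + 1), (1 / 3 : ℝ) ^ t * 1 ^ (8 * r - t) * (8 * r).choose t := by
          rw [Finset.mul_sum]
          refine Finset.sum_congr rfl fun t _ => ?_
          ring
      _ = 3 ^ l * (4 / 3) ^ (8 * r) := by
          rw [← add_pow]
          norm_num
  -- final arithmetic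
  have hBpos : (0:ℝ) < 2 * (3 ^ l * (4 / 3) ^ (8 * r)) := by positivity
  have hDbound : (2:ℝ) ^ (8 * r) ≤ 2 * (3 ^ l * (4 / 3) ^ (8 * r)) * D := by
    have h1 : (2:ℝ) ^ (8 * r) ≤ (F.card : ℝ) * D := by
      calc (2:ℝ) ^ (8 * r) = ((2 ^ (8 * r) : ℕ) : ℝ) := by push_cast; ring
        _ ≤ ((F.card * D : ℕ) : ℝ) := by exact_mod_cast hrank
        _ = (F.card : ℝ) * D := by push_cast; ring
    refine le_trans h1 ?_
    have h2 : (F.card : ℝ) ≤ 2 * (3 ^ l * (4 / 3) ^ (8 * r)) := by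
      calc (F.card : ℝ) ≤ ((2 * ∑ t ∈ range (l + 1), (8 * r).choose t : ℕ) : ℝ) := by
            exact_mod_cast hFcard
        _ = 2 * (∑ t ∈ range (l + 1), (8 * r).choose t : ℝ) := by push_cast; ring
        _ ≤ 2 * (3 ^ l * (4 / 3) ^ (8 * r)) := by linarith [hbinom]
    exact mul_le_mul_of_nonneg_right h2 (Nat.cast_nonneg D)
  have hT : (2:ℝ) ^ (r - 1) * (2 * (3 ^ l * (4 / 3) ^ (8 * r))) ≤ 2 ^ (8 * r) := by
    have h3 : (0:ℝ) < 3 ^ (8 * r) := by positivity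
    have heq : (2:ℝ) ^ (r - 1) * (2 * (3 ^ l * (4 / 3) ^ (8 * r)))
        = (2 ^ (r - 1) * 2 * 3 ^ l * 4 ^ (8 * r)) / 3 ^ (8 * r) := by
      rw [div_pow]
      field_simp
    rw [heq, div_le_iff₀ h3]
    have h2r : (2:ℝ) ^ (r - 1) * 2 = 2 ^ r := by
      rw [← pow_succ, show r - 1 + 1 = r by omega]
    rw [h2r]
    have := Stmt19.numeric r hr
    calc (2:ℝ) ^ r * 3 ^ l * 4 ^ (8 * r)
        = ((2 ^ r * 3 ^ (2 * r - 1) * 4 ^ (8 * r) : ℕ) : ℝ) := by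
          rw [hl]; push_cast; ring
      _ ≤ ((2 ^ (8 * r) * 3 ^ (8 * r) : ℕ) : ℝ) := by exact_mod_cast this
      _ = 2 ^ (8 * r) * 3 ^ (8 * r) := by push_cast; ring
  have hfinal : (2:ℝ) ^ (r - 1) ≤ D := by
    have h5 : (2:ℝ) ^ (r - 1) * (2 * (3 ^ l * (4 / 3) ^ (8 * r)))
        ≤ (D : ℝ) * (2 * (3 ^ l * (4 / 3) ^ (8 * r))) := by
      calc (2:ℝ) ^ (r - 1) * (2 * (3 ^ l * (4 / 3) ^ (8 * r))) ≤ 2 ^ (8 * r) := hT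
        _ ≤ 2 * (3 ^ l * (4 / 3) ^ (8 * r)) * D := hDbound
        _ = (D : ℝ) * (2 * (3 ^ l * (4 / 3) ^ (8 * r))) := by ring
    exact le_of_mul_le_mul_right h5 hBpos
  have hexp : (1/8 : ℝ) * ((8 * r : ℕ) : ℝ) - 1 = ((r - 1 : ℕ) : ℝ) := by
    push_cast [Nat.cast_sub hr]
    ring
  rw [hexp, Real.rpow_natCast]
  exact_mod_cast hfinal
end
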